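/- arXiv:1010.0337 — 4 statements merged into one kernel-verified Lean document; each statement's English description precedes it below -/
import Mathlib

section
/- Suppose N > 1 and n ≥ 2. If X is a locally hamiltonian vector field for the canonical multisymplectic form ω on ℝ^{(N+1)(n+1)} (i.e., d(i_X ω) = 0), then the components X^μ depend only on the base coordinates x^κ, i.e., ∂X^μ/∂q^i = 0, ∂X^μ/∂p_k^κ = 0, and ∂X^μ/∂p = 0 for all indices. -/
open scoped BigOperators

namespace MPS

variable (n N : ℕ)

/-- The multiphase space with base dimension `n+2` and `N` field components:
coordinates `(x^μ, q^i, p_i^μ, p)`. -/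
abbrev Pt := (Fin (n+2) → ℝ) × (Fin N → ℝ) × (Fin N → Fin (n+2) → ℝ) × ℝ

/-- A `k`-form on `Pt`, represented by its values on `k`-tuples of (constant) vectors. -/
abbrev Form (k : ℕ) := Pt n N → (Fin k → Pt n N) → ℝ

/-- The covector `dx^μ`. -/
def cx (μ : Fin (n+2)) : Pt n N → ℝ := fun z => z.1 μ
/-- The covector `dq^i`. -/
def cq (i : Fin N) : Pt n N → ℝ := fun z => z.2.1 i
/-- The covector `dp_i^μ`. -/
def cp (i : Fin N) (μ : Fin (n+2)) : Pt n N → ℝ := fun z => z.2.2.1 i μ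
/-- The covector `dp` (energy). -/
def cE : Pt n N → ℝ := fun z => z.2.2.2

/-- The coordinate vector `∂/∂x^μ`. -/
def ex (μ : Fin (n+2)) : Pt n N := (Pi.single μ 1, 0, 0, 0)
/-- The coordinate vector `∂/∂q^i`. -/
def eq (i : Fin N) : Pt n N := (0, Pi.single i 1, 0, 0)
/-- The coordinate vector `∂/∂p_i^μ`. -/
def ep (i : Fin N) (μ : Fin (n+2)) : Pt n N := (0, 0, Pi.single i (Pi.single μ 1), 0)
/-- The coordinate vector `∂/∂p`. -/
def eE : Pt n N := (0, 0, 0, 1)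

/-- Wedge of a (constant-coefficient) 1-form with a `k`-form. -/
def wedge1 {k : ℕ} (α : Pt n N → ℝ) (β : (Fin k → Pt n N) → ℝ) :
    (Fin (k+1) → Pt n N) → ℝ :=
  fun v => ∑ j : Fin (k+1), (-1 : ℝ) ^ (j : ℕ) * α (v j) * β (v ∘ j.succAbove)

/-- The volume covector `d^n x = dx^1 ∧ … ∧ dx^n`. -/
def vol : (Fin (n+2) → Pt n N) → ℝ :=
  fun v => Matrix.det (Matrix.of fun a b => (v b).1 a)

/-- `d^n x_μ = i_{∂_μ} d^n x`. -/
def volm (μ : Fin (n+2)) : (Fin (n+1) → Pt n N) → ℝ :=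
  fun v => vol n N (Fin.cons (ex n N μ) v)

/-- The canonical multisymplectic form
`ω = dq^i ∧ dp_i^μ ∧ d^n x_μ − dp ∧ d^n x`. -/
def omega : Form n N (n+3) :=
  fun _ v =>
    (∑ i : Fin N, ∑ μ : Fin (n+2),
      wedge1 n N (cq n N i) (wedge1 n N (cp n N i μ) (volm n N μ)) v)
    - wedge1 n N (cE n N) (vol n N) v

/-- The multicanonical form `θ = p_i^μ dq^i ∧ d^n x_μ + p d^n x`. -/
def theta : Form n N (n+2) :=
  fun z v =>
    (∑ i : Fin N, ∑ μ : Fin (n+2),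
      z.2.2.1 i μ * wedge1 n N (cq n N i) (volm n N μ) v)
    + z.2.2.2 * vol n N v

/-- Exterior derivative of a `k`-form on the vector space `Pt`. -/
noncomputable def extd {k : ℕ} (ω : Form n N k) : Form n N (k+1) :=
  fun x v => ∑ j : Fin (k+1), (-1 : ℝ) ^ (j : ℕ) *
    fderiv ℝ (fun y => ω y (v ∘ j.succAbove)) x (v j)

/-- Interior product of a vector field with a `(k+1)`-form. -/
def iVF {k : ℕ} (X : Pt n N → Pt n N) (ω : Form n N (k+1)) : Form n N k :=
  fun x v => ω x (Fin.cons (X x) v)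

/-- Lie derivative of a `(k+1)`-form along a vector field (Cartan's formula). -/
noncomputable def lieD {k : ℕ} (X : Pt n N → Pt n N) (ω : Form n N (k+1)) : Form n N (k+1) :=
  fun x v => extd n N (iVF n N X ω) x v + iVF n N X (extd n N ω) x v

/-- Lie bracket of vector fields on `Pt`. -/
noncomputable def lieB (X Y : Pt n N → Pt n N) : Pt n N → Pt n N :=
  fun z => fderiv ℝ Y z (X z) - fderiv ℝ X z (Y z)

/-- `d^n x_{μν} = i_{∂_ν} i_{∂_μ} d^n x`. -/
def volmn (μ ν : Fin (n+2)) : (Fin n → Pt n N) → ℝ :=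
  fun v => vol n N (Fin.cons (ex n N μ) (Fin.cons (ex n N ν) v))

/-- Partial derivative `∂f/∂x^μ`. -/
noncomputable def pdx (f : Pt n N → ℝ) (z : Pt n N) (μ : Fin (n+2)) : ℝ :=
  fderiv ℝ f z (ex n N μ)

/-- Partial derivative `∂f/∂q^i`. -/
noncomputable def pdq (f : Pt n N → ℝ) (z : Pt n N) (i : Fin N) : ℝ :=
  fderiv ℝ f z (eq n N i)

/-- Partial derivative `∂f/∂p_i^μ`. -/
noncomputable def pdp (f : Pt n N → ℝ) (z : Pt n N) (i : Fin N) (μ : Fin (n+2)) : ℝ :=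
  fderiv ℝ f z (ep n N i μ)

/-- Partial derivative `∂f/∂p`. -/
noncomputable def pdE (f : Pt n N → ℝ) (z : Pt n N) : ℝ :=
  fderiv ℝ f z (eE n N)

end MPS

-- helpers
variable {α : Type*}

lemma cc0 {m : ℕ} (a : α) (f : Fin m → α) :
    (Fin.cons a f : Fin (m+1) → α) ∘ Fin.succAbove 0 = f := by
  funext i; simp [Fin.zero_succAbove]

lemma ccS {m : ℕ} (a : α) (f : Fin (m+1) → α) (j : Fin (m+1)) :
    (Fin.cons a f : Fin (m+2) → α) ∘ Fin.succAbove j.succ = Fin.cons a (f ∘ Fin.succAbove j) := by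
  funext i
  refine Fin.cases ?_ ?_ i
  · simp [Fin.succ_succAbove_zero]
  · intro i; simp [Fin.succ_succAbove_succ]


lemma permMatrix_row {m : ℕ} (σ : Equiv.Perm (Fin m)) (k : Fin m) :
    (σ.permMatrix ℝ) k = Pi.single (σ k) 1 := by
  funext j
  simp [Equiv.Perm.permMatrix, PEquiv.toMatrix, Equiv.toPEquiv, Pi.single_apply, eq_comm]

lemma det_perm_update {m : ℕ} (σ : Equiv.Perm (Fin m)) (t : Fin m) (r : Fin m → ℝ) :
    ((σ.permMatrix ℝ).updateRow t r).det = r (σ t) * ((Equiv.Perm.sign σ : ℤ) : ℝ) := by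
  have hr : r = ∑ k, r (σ k) • (σ.permMatrix ℝ) k := by
    funext a
    rw [Fintype.sum_apply]
    rw [Finset.sum_eq_single (σ.symm a)]
    · simp [permMatrix_row, Pi.single_apply]
    · intro b _ hb
      simp only [permMatrix_row, Pi.smul_apply, smul_eq_mul, Pi.single_apply]
      rw [if_neg, mul_zero]
      intro h; exact hb (by simpa using congrArg σ.symm h.symm)
    · simp
  conv_lhs => rw [hr, Matrix.det_updateRow_sum]
  rw [Matrix.det_permutation]
  simp [mul_comm]

section MPSlemmas
open MPS
variable {n N : ℕ}

lemma vol_zero_of_x {v : Fin (n+2) → Pt n N} (b : Fin (n+2)) (h : (v b).1 = 0) :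
    vol n N v = 0 := by
  apply Matrix.det_eq_zero_of_column_eq_zero b
  intro a; simp [h]

lemma volm_zero_of_x {v : Fin (n+1) → Pt n N} (μ : Fin (n+2)) (b : Fin (n+1)) (h : (v b).1 = 0) :
    volm n N μ v = 0 :=
  vol_zero_of_x b.succ (by simpa using h)

end MPSlemmas
section MPS2
open MPS
variable {n N : ℕ}

@[simp] lemma cq_ex (i : Fin N) (μ : Fin (n+2)) : cq n N i (ex n N μ) = 0 := rfl
@[simp] lemma cq_ep (i k : Fin N) (κ : Fin (n+2)) : cq n N i (ep n N k κ) = 0 := rfl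
@[simp] lemma cq_eE (i : Fin N) : cq n N i (eE n N) = 0 := rfl
@[simp] lemma cq_eq (i k : Fin N) : cq n N i (MPS.eq n N k) = (Pi.single k 1 : Fin N → ℝ) i := rfl
@[simp] lemma cp_ex (i : Fin N) (μ ν : Fin (n+2)) : cp n N i μ (ex n N ν) = 0 := rfl
@[simp] lemma cp_eq (i k : Fin N) (μ : Fin (n+2)) : cp n N i μ (MPS.eq n N k) = 0 := rfl
@[simp] lemma cp_eE (i : Fin N) (μ : Fin (n+2)) : cp n N i μ (eE n N) = 0 := rfl
@[simp] lemma cp_ep (i k : Fin N) (μ κ : Fin (n+2)) :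
    cp n N i μ (ep n N k κ) = (Pi.single k (Pi.single κ 1) : Fin N → Fin (n+2) → ℝ) i μ := rfl
@[simp] lemma cE_ex (μ : Fin (n+2)) : cE n N (ex n N μ) = 0 := rfl
@[simp] lemma cE_eq (k : Fin N) : cE n N (MPS.eq n N k) = 0 := rfl
@[simp] lemma cE_ep (k : Fin N) (κ : Fin (n+2)) : cE n N (ep n N k κ) = 0 := rfl
@[simp] lemma x_eq (k : Fin N) : (MPS.eq n N k).1 = 0 := rfl
@[simp] lemma x_ep (k : Fin N) (κ : Fin (n+2)) : (ep n N k κ).1 = 0 := rfl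
@[simp] lemma x_eE : (eE n N).1 = 0 := rfl

end MPS2
section MPS3
open MPS
variable {n N : ℕ}

lemma vanish1 (i : Fin N) (κ : Fin (n+2)) (u0 : Pt n N)
    (h0 : u0.1 = 0) (h1 : u0.2.1 i = 0) (f : Fin n → Fin (n+2)) (z : Pt n N) (u : Pt n N) :
    omega n N z (Fin.cons u (Fin.cons u0 (Fin.cons (ep n N i κ) (fun s => ex n N (f s))))) = 0 := by
  unfold omega
  rw [sub_eq_zero]
  have hE : wedge1 n N (cE n N) (vol n N)
      (Fin.cons u (Fin.cons u0 (Fin.cons (ep n N i κ) (fun s => ex n N (f s))))) = 0 := by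
    unfold wedge1
    apply Finset.sum_eq_zero
    intro j0 _
    refine Fin.cases ?_ (fun j1 => ?_) j0
    · -- j0 = 0 : cE u * vol (cons u0 (cons ep exs))
      apply mul_eq_zero_of_right
      rw [cc0]
      exact vol_zero_of_x (Fin.succ 0) (by simp)
    · rw [Fin.cons_succ, ccS]
      refine Fin.cases ?_ (fun j2 => ?_) j1
      · -- arg u0, cE u0 generic, vol (cons u (cons ep exs))
        apply mul_eq_zero_of_right
        rw [cc0]
        exact vol_zero_of_x (Fin.succ 0) (by simp)
      · refine Fin.cases ?_ (fun j3 => ?_) j2 <;> simp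
  rw [hE]
  apply Finset.sum_eq_zero
  intro i' _
  apply Finset.sum_eq_zero
  intro μ'' _
  unfold wedge1
  apply Finset.sum_eq_zero
  intro j0 _
  refine Fin.cases ?_ (fun j1 => ?_) j0
  · -- j0 = 0 : cq i' u * inner sum over (cons u0 (cons ep exs))
    apply mul_eq_zero_of_right
    rw [cc0]
    apply Finset.sum_eq_zero
    intro j1 _
    refine Fin.cases ?_ (fun j2 => ?_) j1
    · apply mul_eq_zero_of_right
      rw [cc0]
      exact volm_zero_of_x μ'' 0 (by simp)
    · rw [Fin.cons_succ, ccS]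
      refine Fin.cases ?_ (fun j3 => ?_) j2
      · apply mul_eq_zero_of_right
        rw [cc0]
        exact volm_zero_of_x μ'' 0 (by simp [h0])
      · simp
  · rw [Fin.cons_succ, ccS]
    refine Fin.cases ?_ (fun j2 => ?_) j1
    · -- j0 = 1: arg u0; term is c * cq i' u0 * Sum(cons u (cons ep exs))
      rw [Fin.cons_zero, cc0]
      rcases eq_or_ne i i' with rfl | hne
      · have : cq n N i u0 = 0 := h1
        rw [this]; ring
      · apply mul_eq_zero_of_right
        apply Finset.sum_eq_zero
        intro j1' _
        refine Fin.cases ?_ (fun j2' => ?_) j1'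
        · apply mul_eq_zero_of_right
          rw [cc0]
          exact volm_zero_of_x μ'' 0 (by simp)
        · rw [Fin.cons_succ, ccS]
          refine Fin.cases ?_ (fun j3 => ?_) j2'
          · rw [Fin.cons_zero, cp_ep, Pi.single_eq_of_ne hne.symm]
            simp
          · simp
    · rw [Fin.cons_succ, ccS]
      refine Fin.cases ?_ (fun j3 => ?_) j2
      · simp
      · simp

end MPS3
section MPS4
open MPS
variable {n N : ℕ}

lemma vanish2 (i : Fin N) (u0 : Pt n N)
    (h0 : u0.1 = 0) (h2 : u0.2.2.1 i = 0) (f : Fin n → Fin (n+2)) (z : Pt n N) (u : Pt n N) :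
    omega n N z (Fin.cons u (Fin.cons u0 (Fin.cons (MPS.eq n N i) (fun s => ex n N (f s))))) = 0 := by
  unfold omega
  rw [sub_eq_zero]
  have hE : wedge1 n N (cE n N) (vol n N)
      (Fin.cons u (Fin.cons u0 (Fin.cons (MPS.eq n N i) (fun s => ex n N (f s))))) = 0 := by
    unfold wedge1
    apply Finset.sum_eq_zero
    intro j0 _
    refine Fin.cases ?_ (fun j1 => ?_) j0
    · apply mul_eq_zero_of_right
      rw [cc0]
      exact vol_zero_of_x (Fin.succ 0) (by simp)
    · rw [Fin.cons_succ, ccS]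
      refine Fin.cases ?_ (fun j2 => ?_) j1
      · apply mul_eq_zero_of_right
        rw [cc0]
        exact vol_zero_of_x (Fin.succ 0) (by simp)
      · refine Fin.cases ?_ (fun j3 => ?_) j2 <;> simp
  rw [hE]
  apply Finset.sum_eq_zero
  intro i' _
  apply Finset.sum_eq_zero
  intro μ'' _
  unfold wedge1
  apply Finset.sum_eq_zero
  intro j0 _
  refine Fin.cases ?_ (fun j1 => ?_) j0
  · -- j0 = 0 : arg u
    apply mul_eq_zero_of_right
    rw [cc0]
    apply Finset.sum_eq_zero
    intro j1 _
    refine Fin.cases ?_ (fun j2 => ?_) j1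
    · apply mul_eq_zero_of_right
      rw [cc0]
      exact volm_zero_of_x μ'' 0 (by simp)
    · rw [Fin.cons_succ, ccS]
      refine Fin.cases ?_ (fun j3 => ?_) j2
      · simp
      · simp
  · rw [Fin.cons_succ, ccS]
    refine Fin.cases ?_ (fun j2 => ?_) j1
    · -- j0 = 1: arg u0
      apply mul_eq_zero_of_right
      rw [cc0]
      apply Finset.sum_eq_zero
      intro j1' _
      refine Fin.cases ?_ (fun j2' => ?_) j1'
      · apply mul_eq_zero_of_right
        rw [cc0]
        exact volm_zero_of_x μ'' 0 (by simp)
      · rw [Fin.cons_succ, ccS]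
        refine Fin.cases ?_ (fun j3 => ?_) j2'
        · simp
        · simp
    · rw [Fin.cons_succ, ccS]
      refine Fin.cases ?_ (fun j3 => ?_) j2
      · -- j0 = 2: arg eq i
        rcases eq_or_ne i i' with rfl | hne
        · apply mul_eq_zero_of_right
          apply Finset.sum_eq_zero
          intro j1' _
          refine Fin.cases ?_ (fun j2' => ?_) j1'
          · apply mul_eq_zero_of_right
            rw [cc0]
            exact volm_zero_of_x μ'' 0 (by simp [h0])
          · rw [Fin.cons_succ, ccS]
            refine Fin.cases ?_ (fun j3 => ?_) j2'
            · rw [Fin.cons_zero]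
              have : cp n N i μ'' u0 = 0 := congrFun h2 μ''
              rw [this]; ring
            · simp
        · rw [Fin.cons_zero, cq_eq, Pi.single_eq_of_ne hne.symm]
          ring
      · simp

lemma vanish3 {n' : ℕ} {N : ℕ} (i : Fin N) (κ : Fin (n'+3)) (u0 : Pt (n'+1) N)
    (h0 : u0.1 = 0) (f : Fin n' → Fin (n'+3)) (z : Pt (n'+1) N) (u : Pt (n'+1) N) :
    omega (n'+1) N z (Fin.cons u (Fin.cons u0 (Fin.cons (MPS.eq (n'+1) N i)
      (Fin.cons (ep (n'+1) N i κ) (fun s => ex (n'+1) N (f s)))))) = 0 := by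
  unfold omega
  rw [sub_eq_zero]
  have hE : wedge1 (n'+1) N (cE (n'+1) N) (vol (n'+1) N)
      (Fin.cons u (Fin.cons u0 (Fin.cons (MPS.eq (n'+1) N i)
        (Fin.cons (ep (n'+1) N i κ) (fun s => ex (n'+1) N (f s)))))) = 0 := by
    unfold wedge1
    apply Finset.sum_eq_zero
    intro j0 _
    refine Fin.cases ?_ (fun j1 => ?_) j0
    · apply mul_eq_zero_of_right
      rw [cc0]
      exact vol_zero_of_x (Fin.succ 0) (by simp)
    · rw [Fin.cons_succ, ccS]
      refine Fin.cases ?_ (fun j2 => ?_) j1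
      · apply mul_eq_zero_of_right
        rw [cc0]
        exact vol_zero_of_x (Fin.succ 0) (by simp)
      · rw [Fin.cons_succ, ccS]
        refine Fin.cases ?_ (fun j3 => ?_) j2
        · simp
        · refine Fin.cases ?_ (fun j4 => ?_) j3 <;> simp
  rw [hE]
  apply Finset.sum_eq_zero
  intro i' _
  apply Finset.sum_eq_zero
  intro μ'' _
  unfold wedge1
  apply Finset.sum_eq_zero
  intro j0 _
  refine Fin.cases ?_ (fun j1 => ?_) j0
  · -- arg u
    apply mul_eq_zero_of_right
    rw [cc0]
    apply Finset.sum_eq_zero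
    intro j1 _
    refine Fin.cases ?_ (fun j2 => ?_) j1
    · apply mul_eq_zero_of_right
      rw [cc0]
      exact volm_zero_of_x μ'' 0 (by simp)
    · rw [Fin.cons_succ, ccS]
      refine Fin.cases ?_ (fun j2' => ?_) j2
      · simp
      · rw [Fin.cons_succ, ccS]
        refine Fin.cases ?_ (fun j3 => ?_) j2'
        · apply mul_eq_zero_of_right
          rw [cc0]
          exact volm_zero_of_x μ'' 0 (by simp [h0])
        · simp
  · rw [Fin.cons_succ, ccS]
    refine Fin.cases ?_ (fun j2 => ?_) j1
    · -- arg u0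
      apply mul_eq_zero_of_right
      rw [cc0]
      apply Finset.sum_eq_zero
      intro j1' _
      refine Fin.cases ?_ (fun j2' => ?_) j1'
      · apply mul_eq_zero_of_right
        rw [cc0]
        exact volm_zero_of_x μ'' 0 (by simp)
      · rw [Fin.cons_succ, ccS]
        refine Fin.cases ?_ (fun j3 => ?_) j2'
        · simp
        · rw [Fin.cons_succ, ccS]
          refine Fin.cases ?_ (fun j4 => ?_) j3
          · apply mul_eq_zero_of_right
            rw [cc0]
            exact volm_zero_of_x μ'' (Fin.succ 0) (by simp)
          · simp
    · rw [Fin.cons_succ, ccS]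
      refine Fin.cases ?_ (fun j3 => ?_) j2
      · -- arg eq i
        apply mul_eq_zero_of_right
        rw [cc0]
        apply Finset.sum_eq_zero
        intro j1' _
        refine Fin.cases ?_ (fun j2' => ?_) j1'
        · apply mul_eq_zero_of_right
          rw [cc0]
          exact volm_zero_of_x μ'' 0 (by simp [h0])
        · rw [Fin.cons_succ, ccS]
          refine Fin.cases ?_ (fun j3' => ?_) j2'
          · apply mul_eq_zero_of_right
            rw [cc0]
            exact volm_zero_of_x μ'' (Fin.succ 0) (by simp)
          · rw [Fin.cons_succ, ccS]
            refine Fin.cases ?_ (fun j4 => ?_) j3'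
            · apply mul_eq_zero_of_right
              rw [cc0]
              exact volm_zero_of_x μ'' (Fin.succ 0) (by simp [h0])
            · simp
      · rw [Fin.cons_succ, ccS]
        refine Fin.cases ?_ (fun j4 => ?_) j3
        · simp
        · simp

end MPS4
section MPS5
open MPS Matrix
variable {n N : ℕ}

lemma volm_eval (σ : Equiv.Perm (Fin (n+2))) (u : Pt n N) :
    volm n N (σ 0) (Fin.cons u (fun s : Fin n => ex n N (σ s.succ.succ)))
      = u.1 (σ 1) * ((Equiv.Perm.sign σ : ℤ) : ℝ) := by
  have hM : (Matrix.of fun a b => ((Fin.cons (ex n N (σ 0))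
      (Fin.cons u (fun s : Fin n => ex n N (σ s.succ.succ))) : Fin (n+2) → Pt n N) b).1 a)
      = ((σ.permMatrix ℝ).updateRow 1 u.1)ᵀ := by
    ext a b
    simp only [Matrix.transpose_apply, Matrix.of_apply]
    refine Fin.cases ?_ (fun j => ?_) b
    · rw [Fin.cons_zero, Matrix.updateRow_ne (by simp [Fin.ext_iff]), permMatrix_row]
      rfl
    · refine Fin.cases ?_ (fun s => ?_) j
      · rw [Fin.succ_zero_eq_one, Fin.cons_one, Matrix.updateRow_self]
        simp
      · rw [Fin.cons_succ, Fin.cons_succ, Matrix.updateRow_ne (by simp [Fin.ext_iff]),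
          permMatrix_row]
        rfl
  show vol n N _ = _
  unfold vol
  rw [hM, Matrix.det_transpose, det_perm_update]

lemma eval_main (i : Fin N) (σ : Equiv.Perm (Fin (n+2))) (z u : Pt n N) :
    omega n N z (Fin.cons u (Fin.cons (MPS.eq n N i) (Fin.cons (ep n N i (σ 0))
      (fun s : Fin n => ex n N (σ s.succ.succ)))))
      = u.1 (σ 1) * ((Equiv.Perm.sign σ : ℤ) : ℝ) := by
  unfold omega
  have hE : wedge1 n N (cE n N) (vol n N)
      (Fin.cons u (Fin.cons (MPS.eq n N i) (Fin.cons (ep n N i (σ 0))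
        (fun s : Fin n => ex n N (σ s.succ.succ))))) = 0 := by
    unfold wedge1
    apply Finset.sum_eq_zero
    intro j0 _
    refine Fin.cases ?_ (fun j1 => ?_) j0
    · apply mul_eq_zero_of_right
      rw [cc0]
      exact vol_zero_of_x 0 (by simp)
    · rw [Fin.cons_succ]
      refine Fin.cases ?_ (fun j2 => ?_) j1
      · simp
      · refine Fin.cases ?_ (fun j3 => ?_) j2 <;> simp
  rw [hE, sub_zero]
  have hS : ∀ (i' : Fin N) (μ'' : Fin (n+2)),
      wedge1 n N (cq n N i') (wedge1 n N (cp n N i' μ'') (volm n N μ''))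
        (Fin.cons u (Fin.cons (MPS.eq n N i) (Fin.cons (ep n N i (σ 0))
          (fun s : Fin n => ex n N (σ s.succ.succ)))))
      = (Pi.single i 1 : Fin N → ℝ) i' *
        ((Pi.single i (Pi.single (σ 0) 1) : Fin N → Fin (n+2) → ℝ) i' μ'' *
          volm n N μ'' (Fin.cons u (fun s : Fin n => ex n N (σ s.succ.succ)))) := by
    intro i' μ''
    unfold wedge1
    rw [Finset.sum_eq_single (Fin.succ 0)]
    · -- value at j0 = succ 0
      rw [Fin.cons_succ, Fin.cons_zero, ccS, cc0, cq_eq]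
      rw [Finset.sum_eq_single (Fin.succ 0)]
      · rw [Fin.cons_succ, Fin.cons_zero, ccS, cc0, cp_ep]
        simp [mul_assoc]
      · intro b _ hb
        revert hb
        refine Fin.cases ?_ (fun j1 => ?_) b
        · intro _
          apply mul_eq_zero_of_right
          rw [cc0]
          exact volm_zero_of_x μ'' 0 (by simp)
        · refine Fin.cases ?_ (fun j2 => ?_) j1
          · intro hb; exact absurd rfl hb
          · intro _
            rw [Fin.cons_succ, ccS]
            simp
      · simp
    · intro b _ hb
      revert hb
      refine Fin.cases ?_ (fun j1 => ?_) b
      · intro _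
         -- j0 = 0 : cq i' u * inner, inner = 0
        apply mul_eq_zero_of_right
        rw [cc0]
        apply Finset.sum_eq_zero
        intro j1 _
        refine Fin.cases ?_ (fun j2 => ?_) j1
        · simp
        · rw [Fin.cons_succ, ccS]
          refine Fin.cases ?_ (fun j3 => ?_) j2
          · apply mul_eq_zero_of_right
            rw [cc0]
            exact volm_zero_of_x μ'' 0 (by simp)
          · simp
      · refine Fin.cases ?_ (fun j2 => ?_) j1
        · intro hb; exact absurd rfl hb
        · intro _
          rw [Fin.cons_succ]
          refine Fin.cases ?_ (fun j3 => ?_) j2 <;> simp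
    · simp
  calc (∑ i' : Fin N, ∑ μ'' : Fin (n+2),
      wedge1 n N (cq n N i') (wedge1 n N (cp n N i' μ'') (volm n N μ''))
        (Fin.cons u (Fin.cons (MPS.eq n N i) (Fin.cons (ep n N i (σ 0))
          (fun s : Fin n => ex n N (σ s.succ.succ))))))
      = ∑ i' : Fin N, ∑ μ'' : Fin (n+2), (Pi.single i 1 : Fin N → ℝ) i' *
        ((Pi.single i (Pi.single (σ 0) 1) : Fin N → Fin (n+2) → ℝ) i' μ'' *
          volm n N μ'' (Fin.cons u (fun s : Fin n => ex n N (σ s.succ.succ)))) := by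
        apply Finset.sum_congr rfl; intro i' _; apply Finset.sum_congr rfl; intro μ'' _
        exact hS i' μ''
    _ = volm n N (σ 0) (Fin.cons u (fun s : Fin n => ex n N (σ s.succ.succ))) := by
        rw [Finset.sum_eq_single i]
        · rw [Pi.single_eq_same, Pi.single_eq_same]
          rw [Finset.sum_eq_single (σ 0)]
          · rw [Pi.single_eq_same]; ring
          · intro b _ hb
            rw [Pi.single_eq_of_ne hb]; ring
          · simp
        · intro b _ hb
          rw [Pi.single_eq_of_ne hb]
          simp
        · simp
    _ = u.1 (σ 1) * ((Equiv.Perm.sign σ : ℤ) : ℝ) := volm_eval σ u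

end MPS5
section MPS6
open MPS

lemma vanishAll {n N : ℕ} (i : Fin N) (σ : Equiv.Perm (Fin (n+2))) (u0 : Pt n N)
    (h0 : u0.1 = 0) (h1 : u0.2.1 i = 0) (h2 : u0.2.2.1 i = 0)
    (j : Fin (n+2)) (y u : Pt n N) :
    omega n N y (Fin.cons u (Fin.cons u0 ((Fin.cons (MPS.eq n N i) (Fin.cons (ep n N i (σ 0))
      (fun s : Fin n => ex n N (σ s.succ.succ)))) ∘ Fin.succAbove j))) = 0 := by
  refine Fin.cases ?_ (fun j1 => ?_) j
  · rw [cc0]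
    exact vanish1 i (σ 0) u0 h0 h1 (fun s => σ s.succ.succ) y u
  · rw [ccS]
    refine Fin.cases ?_ (fun s => ?_) j1
    · rw [cc0]
      exact vanish2 i u0 h0 h2 (fun s => σ s.succ.succ) y u
    · obtain ⟨n', rfl⟩ : ∃ n', n = n' + 1 := by
        rcases Nat.exists_eq_succ_of_ne_zero (Nat.pos_iff_ne_zero.mp s.pos) with ⟨n', hn⟩
        exact ⟨n', hn⟩
      rw [ccS]
      exact vanish3 i (σ 0) u0 h0 (fun t => σ ((s.succAbove t).succ.succ)) y u

lemma master {n N : ℕ} (i : Fin N) (σ : Equiv.Perm (Fin (n+2))) (u0 : Pt n N)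
    (h0 : u0.1 = 0) (h1 : u0.2.1 i = 0) (h2 : u0.2.2.1 i = 0)
    (X : Pt n N → Pt n N) (hX : ContDiff ℝ (⊤ : ℕ∞) X)
    (hH : ∀ (z : Pt n N) (v : Fin (n+3) → Pt n N), lieD n N X (omega n N) z v = 0)
    (z : Pt n N) :
    fderiv ℝ (fun y => (X y).1 (σ 1)) z u0 = 0 := by
  have hdX : DifferentiableAt ℝ X z := (hX.differentiable (by simp)).differentiableAt
  set L : Pt n N →L[ℝ] ℝ :=
    (ContinuousLinearMap.proj (σ 1)).comp
      (ContinuousLinearMap.fst ℝ (Fin (n+2) → ℝ) ((Fin N → ℝ) × (Fin N → Fin (n+2) → ℝ) × ℝ))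
    with hL
  have hd : DifferentiableAt ℝ (fun y => (X y).1 (σ 1)) z := by
    have : (fun y => (X y).1 (σ 1)) = fun y => L (X y) := rfl
    rw [this]
    exact L.differentiableAt.comp z hdX
  have h := hH z (Fin.cons u0 (Fin.cons (MPS.eq n N i) (Fin.cons (ep n N i (σ 0))
      (fun s : Fin n => ex n N (σ s.succ.succ)))))
  unfold lieD at h
  have hB : iVF n N X (extd n N (omega n N)) z (Fin.cons u0 (Fin.cons (MPS.eq n N i)
      (Fin.cons (ep n N i (σ 0)) (fun s : Fin n => ex n N (σ s.succ.succ))))) = 0 := by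
    show extd n N (omega n N) z _ = 0
    unfold extd
    apply Finset.sum_eq_zero
    intro j _
    have : (fun y => omega n N y
        ((Fin.cons (X z) (Fin.cons u0 (Fin.cons (MPS.eq n N i) (Fin.cons (ep n N i (σ 0))
          (fun s : Fin n => ex n N (σ s.succ.succ)))))) ∘ j.succAbove)) =
        (fun _ => omega n N z
        ((Fin.cons (X z) (Fin.cons u0 (Fin.cons (MPS.eq n N i) (Fin.cons (ep n N i (σ 0))
          (fun s : Fin n => ex n N (σ s.succ.succ)))))) ∘ j.succAbove)) := rfl
    rw [this, fderiv_fun_const]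
    simp
  have hA : extd n N (iVF n N X (omega n N)) z (Fin.cons u0 (Fin.cons (MPS.eq n N i)
      (Fin.cons (ep n N i (σ 0)) (fun s : Fin n => ex n N (σ s.succ.succ))))) =
      ((Equiv.Perm.sign σ : ℤ) : ℝ) * fderiv ℝ (fun y => (X y).1 (σ 1)) z u0 := by
    unfold extd
    rw [Finset.sum_eq_single (0 : Fin (n+3))]
    · rw [cc0, Fin.cons_zero]
      have he : (fun y => iVF n N X (omega n N) y (Fin.cons (MPS.eq n N i)
          (Fin.cons (ep n N i (σ 0)) (fun s : Fin n => ex n N (σ s.succ.succ))))) =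
          fun y => (X y).1 (σ 1) * ((Equiv.Perm.sign σ : ℤ) : ℝ) :=
        funext fun y => eval_main i σ y (X y)
      rw [he, fderiv_mul_const hd]
      simp [mul_comm]
    · intro b _ hb
      obtain ⟨j', rfl⟩ := Fin.eq_succ_of_ne_zero hb
      rw [ccS]
      have he : (fun y => iVF n N X (omega n N) y (Fin.cons u0 ((Fin.cons (MPS.eq n N i)
          (Fin.cons (ep n N i (σ 0)) (fun s : Fin n => ex n N (σ s.succ.succ)))) ∘
            Fin.succAbove j'))) = fun _ => (0:ℝ) :=
        funext fun y => vanishAll i σ u0 h0 h1 h2 j' y (X y)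
      rw [he, fderiv_fun_const]
      simp
    · simp
  rw [hA, hB, add_zero] at h
  have hc : ((Equiv.Perm.sign σ : ℤ) : ℝ) ≠ 0 := by
    simp
  exact (mul_eq_zero.mp h).resolve_left hc

end MPS6
open MPS in
/-- for `N > 1` (and base dimension `n+2 ≥ 2`), the components `X^μ` of a
locally hamiltonian vector field for `ω` depend only on the base coordinates `x^κ`:
all their partial derivatives with respect to `q^i`, `p_k^κ` and `p` vanish. -/
theorem locHam_base_components (n N : ℕ) (hN : 1 < N)
    (X : Pt n N → Pt n N) (hX : ContDiff ℝ (⊤ : ℕ∞) X)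
    (hH : ∀ (z : Pt n N) (v : Fin (n+3) → Pt n N), lieD n N X (omega n N) z v = 0) :
    ∀ (z : Pt n N) (μ : Fin (n+2)),
      (∀ i : Fin N, pdq n N (fun y => (X y).1 μ) z i = 0) ∧
      (∀ (k : Fin N) (κ : Fin (n+2)), pdp n N (fun y => (X y).1 μ) z k κ = 0) ∧
      pdE n N (fun y => (X y).1 μ) z = 0 := by
  intro z μ
  have h0N : (0:ℕ) < N := lt_trans Nat.zero_lt_one hN
  have hσ1 : (Equiv.swap (1 : Fin (n+2)) μ) 1 = μ := Equiv.swap_apply_left 1 μ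
  have hpick : ∀ k : Fin N, ∃ i₀ : Fin N, i₀ ≠ k := by
    intro k
    rcases eq_or_ne (⟨0, h0N⟩ : Fin N) k with h | h
    · refine ⟨⟨1, hN⟩, ?_⟩
      rw [← h]; simp [Fin.ext_iff]
    · exact ⟨⟨0, h0N⟩, h⟩
  refine ⟨?_, ?_, ?_⟩
  · intro i
    obtain ⟨i₀, hne⟩ := hpick i
    have := master i₀ (Equiv.swap 1 μ) (MPS.eq n N i) rfl
      (Pi.single_eq_of_ne hne 1) rfl X hX hH z
    rw [hσ1] at this
    exact this
  · intro k κ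
    obtain ⟨i₀, hne⟩ := hpick k
    have := master i₀ (Equiv.swap 1 μ) (ep n N k κ) rfl rfl
      (Pi.single_eq_of_ne hne _) X hX hH z
    rw [hσ1] at this
    exact this
  · have := master (⟨0, h0N⟩ : Fin N) (Equiv.swap 1 μ) (eE n N) rfl rfl rfl X hX hH z
    rw [hσ1] at this
    exact this
end

section
/- If X is a locally hamiltonian vector field for the canonical multisymplectic form ω on ℝ^{(N+1)(n+1)}, then the components X^i are independent of the multimomentum variables p_k^κ and of the energy variable p: ∂X^i/∂p_k^κ = 0 and ∂X^i/∂p = 0. -/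
open scoped BigOperators

section Aux
open MPS

variable {n N : ℕ}

lemma wedge1_eq_zero {k : ℕ} {α : Pt n N → ℝ} {β : (Fin k → Pt n N) → ℝ}
    {v : Fin (k+1) → Pt n N}
    (h : ∀ j : Fin (k+1), α (v j) = 0 ∨ β (v ∘ j.succAbove) = 0) :
    wedge1 n N α β v = 0 := by
  unfold MPS.wedge1
  apply Finset.sum_eq_zero
  intro j _
  rcases h j with h' | h' <;> simp [h']

lemma wedge1_eq_single {k : ℕ} (α : Pt n N → ℝ) (β : (Fin k → Pt n N) → ℝ)
    (v : Fin (k+1) → Pt n N) (j0 : Fin (k+1))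
    (h : ∀ j : Fin (k+1), j ≠ j0 → α (v j) = 0 ∨ β (v ∘ j.succAbove) = 0) :
    wedge1 n N α β v = (-1)^(j0:ℕ) * α (v j0) * β (v ∘ j0.succAbove) := by
  unfold MPS.wedge1
  apply Finset.sum_eq_single
  · intro j _ hj
    rcases h j hj with h' | h' <;> simp [h']
  · intro hj; exact absurd (Finset.mem_univ j0) hj

lemma cons_comp_zero_succAbove {m : ℕ} {γ : Type*} (a : γ) (w : Fin m → γ) :
    (Fin.cons a w : Fin (m+1) → γ) ∘ Fin.succAbove (0 : Fin (m+1)) = w := by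
  funext j
  simp [Fin.zero_succAbove]

lemma cons_comp_succ_succAbove {m : ℕ} {γ : Type*} (a : γ) (w : Fin (m+1) → γ) (j : Fin (m+1)) :
    (Fin.cons a w : Fin (m+2) → γ) ∘ Fin.succAbove (Fin.succ j) = Fin.cons a (w ∘ j.succAbove) := by
  funext x
  refine Fin.cases ?_ (fun x => ?_) x
  · simp
  · simp [Fin.succ_succAbove_succ]

lemma vol_eq_zero (w : Fin (n+2) → Pt n N) (b : Fin (n+2)) (h : (w b).1 = 0) :
    vol n N w = 0 := by
  unfold MPS.vol
  exact Matrix.det_eq_zero_of_column_eq_zero b (fun a => by simp [h])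

lemma vol_cons (a : Pt n N) (μ : Fin (n+2)) :
    vol n N (Fin.cons a (fun j => ex n N (μ.succAbove j))) = (-1)^(μ:ℕ) * a.1 μ := by
  unfold MPS.vol
  rw [Matrix.det_succ_column_zero]
  rw [Finset.sum_eq_single μ]
  · have h1 : ((Matrix.of fun (r c : Fin (n+2)) =>
        ((Fin.cons a (fun j => ex n N (μ.succAbove j)) : Fin (n+2) → Pt n N) c).1 r).submatrix
          μ.succAbove Fin.succ) = 1 := by
      ext r c
      simp only [Matrix.submatrix_apply, Matrix.of_apply, Fin.cons_succ, Matrix.one_apply]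
      simp [MPS.ex, Pi.single_apply, Fin.succAbove_right_inj]
    rw [h1, Matrix.det_one]
    simp [Matrix.of_apply]
  · intro b _ hb
    have : ((Matrix.of fun (r c : Fin (n+2)) =>
        ((Fin.cons a (fun j => ex n N (μ.succAbove j)) : Fin (n+2) → Pt n N) c).1 r).submatrix
          b.succAbove Fin.succ).det = 0 := by
      obtain ⟨c0, hc0⟩ := Fin.exists_succAbove_eq hb
      apply Matrix.det_eq_zero_of_column_eq_zero c0
      intro r
      simp only [Matrix.submatrix_apply, Matrix.of_apply, Fin.cons_succ, hc0]
      simp [MPS.ex, Pi.single_apply]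
    rw [this]; ring
  · intro h; exact absurd (Finset.mem_univ μ) h

lemma vol_swap (u1 u2 : Pt n N) (w : Fin n → Pt n N) :
    vol n N (Fin.cons u1 (Fin.cons u2 w)) = - vol n N (Fin.cons u2 (Fin.cons u1 w)) := by
  unfold MPS.vol
  have h : (Matrix.of fun (r c : Fin (n+2)) =>
        ((Fin.cons u1 (Fin.cons u2 w) : Fin (n+2) → Pt n N) c).1 r)
      = (Matrix.of fun (r c : Fin (n+2)) =>
        ((Fin.cons u2 (Fin.cons u1 w) : Fin (n+2) → Pt n N) c).1 r).submatrix id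
          (Equiv.swap 0 1) := by
    ext r c
    simp only [Matrix.submatrix_apply, Matrix.of_apply, id_eq]
    refine Fin.cases ?_ (fun c => ?_) c
    · rw [Equiv.swap_apply_left]
      rw [← Fin.succ_zero_eq_one, Fin.cons_succ, Fin.cons_zero, Fin.cons_zero]
    · refine Fin.cases ?_ (fun c => ?_) c
      · rw [Fin.succ_zero_eq_one, Equiv.swap_apply_right]
        rw [← Fin.succ_zero_eq_one, Fin.cons_succ, Fin.cons_zero, Fin.cons_zero]
      · have hc : Equiv.swap (0 : Fin (n+2)) 1 c.succ.succ = c.succ.succ := by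
          apply Equiv.swap_apply_of_ne_of_ne
          · exact Fin.succ_ne_zero _
          · rw [← Fin.succ_zero_eq_one]
            rw [Ne, Fin.succ_inj]
            exact Fin.succ_ne_zero _
        rw [hc, Fin.cons_succ, Fin.cons_succ, Fin.cons_succ, Fin.cons_succ]
  rw [h, Matrix.det_permute']
  have : Equiv.Perm.sign (Equiv.swap (0 : Fin (n+2)) 1) = -1 :=
    Equiv.Perm.sign_swap (by simp [Fin.ext_iff])
  rw [this]
  simp

end Aux
section Aux2
open MPS

variable {n N : ℕ}

lemma pick3 {γ : Type*} (j1 j2 j3 x y : γ) (h12 : j1 ≠ j2) (h13 : j1 ≠ j3) (h23 : j2 ≠ j3) :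
    (j1 ≠ x ∧ j1 ≠ y) ∨ (j2 ≠ x ∧ j2 ≠ y) ∨ (j3 ≠ x ∧ j3 ≠ y) := by
  by_cases e1 : j1 = x
  · subst e1
    by_cases e2 : j2 = y
    · subst e2
      exact Or.inr (Or.inr ⟨Ne.symm h13, Ne.symm h23⟩)
    · exact Or.inr (Or.inl ⟨Ne.symm h12, e2⟩)
  · by_cases e1y : j1 = y
    · subst e1y
      by_cases e2 : j2 = x
      · subst e2
        exact Or.inr (Or.inr ⟨Ne.symm h23, Ne.symm h13⟩)
      · exact Or.inr (Or.inl ⟨e2, Ne.symm h12⟩)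
    · exact Or.inl ⟨e1, e1y⟩

lemma omega_zero_three (z : Pt n N) (t : Fin (n+3) → Pt n N) (j1 j2 j3 : Fin (n+3))
    (h12 : j1 ≠ j2) (h13 : j1 ≠ j3) (h23 : j2 ≠ j3)
    (hx1 : (t j1).1 = 0) (hx2 : (t j2).1 = 0) (hx3 : (t j3).1 = 0) :
    omega n N z t = 0 := by
  have hpick : ∀ x y : Fin (n+3), ∃ jk, jk ≠ x ∧ jk ≠ y ∧ (t jk).1 = 0 := by
    intro x y
    rcases pick3 j1 j2 j3 x y h12 h13 h23 with ⟨h, h'⟩ | ⟨h, h'⟩ | ⟨h, h'⟩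
    exacts [⟨j1, h, h', hx1⟩, ⟨j2, h, h', hx2⟩, ⟨j3, h, h', hx3⟩]
  have hvol : ∀ j : Fin (n+3), vol n N (t ∘ j.succAbove) = 0 := by
    intro j
    obtain ⟨jk, hj, -, hx⟩ := hpick j j
    obtain ⟨b, hb⟩ := Fin.exists_succAbove_eq hj
    exact vol_eq_zero _ b (by simp only [Function.comp_apply, hb, hx])
  have hvolm : ∀ (μ : Fin (n+2)) (j : Fin (n+3)) (j' : Fin (n+2)),
      volm n N μ ((t ∘ j.succAbove) ∘ j'.succAbove) = 0 := by
    intro μ j j'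
    obtain ⟨jk, hj, hsa, hx⟩ := hpick j (j.succAbove j')
    obtain ⟨c, hc⟩ := Fin.exists_succAbove_eq hj
    have hcj' : c ≠ j' := by rintro rfl; exact hsa hc.symm
    obtain ⟨b, hb⟩ := Fin.exists_succAbove_eq hcj'
    show vol n N (Fin.cons (ex n N μ) ((t ∘ j.succAbove) ∘ j'.succAbove)) = 0
    exact vol_eq_zero _ b.succ (by simp only [Fin.cons_succ, Function.comp_apply, hb, hc, hx])
  have hB : wedge1 n N (cE n N) (vol n N) t = 0 := wedge1_eq_zero (fun j => Or.inr (hvol j))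
  have hA : (∑ i : Fin N, ∑ μ : Fin (n+2),
      wedge1 n N (cq n N i) (wedge1 n N (cp n N i μ) (volm n N μ)) t) = 0 := by
    apply Finset.sum_eq_zero; intro i _
    apply Finset.sum_eq_zero; intro μ _
    apply wedge1_eq_zero; intro j
    exact Or.inr (wedge1_eq_zero (fun j' => Or.inr (hvolm μ j j')))
  show (∑ i : Fin N, ∑ μ : Fin (n+2),
      wedge1 n N (cq n N i) (wedge1 n N (cp n N i μ) (volm n N μ)) t)
    - wedge1 n N (cE n N) (vol n N) t = 0
  rw [hA, hB, sub_zero]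

lemma omega_zero_q (z : Pt n N) (t : Fin (n+3) → Pt n N) (j1 j2 : Fin (n+3))
    (h12 : j1 ≠ j2) (h10 : j1 ≠ 0) (h20 : j2 ≠ 0)
    (hq : ∀ j, j ≠ 0 → (t j).2.1 = 0)
    (hx1 : (t j1).1 = 0) (hx2 : (t j2).1 = 0) :
    omega n N z t = 0 := by
  have hvol : ∀ j : Fin (n+3), vol n N (t ∘ j.succAbove) = 0 := by
    intro j
    have hex : ∃ jk, jk ≠ j ∧ (t jk).1 = 0 := by
      by_cases h : j1 = j
      · exact ⟨j2, by rw [← h]; exact h12.symm, hx2⟩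
      · exact ⟨j1, h, hx1⟩
    obtain ⟨jk, hjk, hx⟩ := hex
    obtain ⟨b, hb⟩ := Fin.exists_succAbove_eq hjk
    exact vol_eq_zero _ b (by simp only [Function.comp_apply, hb, hx])
  have hvolm : ∀ (μ : Fin (n+2)) (j' : Fin (n+2)),
      volm n N μ ((t ∘ Fin.succAbove (0 : Fin (n+3))) ∘ j'.succAbove) = 0 := by
    intro μ j'
    have hex : ∃ jk, jk ≠ (0:Fin (n+3)) ∧ jk ≠ Fin.succAbove (0:Fin (n+3)) j' ∧ (t jk).1 = 0 := by
      by_cases h : j1 = Fin.succAbove (0:Fin (n+3)) j'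
      · refine ⟨j2, h20, fun hc => h12 ?_, hx2⟩
        rw [h, hc]
      · exact ⟨j1, h10, h, hx1⟩
    obtain ⟨jk, h0, hsa, hx⟩ := hex
    obtain ⟨c, hc⟩ := Fin.exists_succAbove_eq h0
    have hcj' : c ≠ j' := by rintro rfl; exact hsa hc.symm
    obtain ⟨b, hb⟩ := Fin.exists_succAbove_eq hcj'
    show vol n N (Fin.cons (ex n N μ) ((t ∘ Fin.succAbove (0:Fin (n+3))) ∘ j'.succAbove)) = 0
    exact vol_eq_zero _ b.succ (by simp only [Fin.cons_succ, Function.comp_apply, hb, hc, hx])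
  have hB : wedge1 n N (cE n N) (vol n N) t = 0 := wedge1_eq_zero (fun j => Or.inr (hvol j))
  have hA : (∑ i : Fin N, ∑ μ : Fin (n+2),
      wedge1 n N (cq n N i) (wedge1 n N (cp n N i μ) (volm n N μ)) t) = 0 := by
    apply Finset.sum_eq_zero; intro i _
    apply Finset.sum_eq_zero; intro μ _
    apply wedge1_eq_zero; intro j
    refine Fin.cases ?_ (fun m => ?_) j
    · exact Or.inr (wedge1_eq_zero (fun j' => Or.inr (hvolm μ j')))
    · left
      show (t m.succ).2.1 i = 0
      rw [hq m.succ (Fin.succ_ne_zero m)]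
      rfl
  show (∑ i : Fin N, ∑ μ : Fin (n+2),
      wedge1 n N (cq n N i) (wedge1 n N (cp n N i μ) (volm n N μ)) t)
    - wedge1 n N (cE n N) (vol n N) t = 0
  rw [hA, hB, sub_zero]

end Aux2
section Aux3
open MPS

variable {n N : ℕ}

lemma omega_cons_ep (z a : Pt n N) (i' : Fin N) (μ' μ : Fin (n+2)) :
    omega n N z (Fin.cons a (Fin.cons (ep n N i' μ') (fun j => ex n N (μ.succAbove j)))) =
      if μ' = μ then (-1)^(μ:ℕ) * a.2.1 i' else 0 := by
  set w : Fin (n+2) → Pt n N := Fin.cons (ep n N i' μ') (fun j => ex n N (μ.succAbove j)) with hw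
  have hB : wedge1 n N (cE n N) (vol n N) (Fin.cons a w) = 0 := by
    apply wedge1_eq_zero
    intro j
    refine Fin.cases ?_ (fun m => ?_) j
    · right
      rw [cons_comp_zero_succAbove]
      refine vol_eq_zero _ 0 ?_
      rw [hw, Fin.cons_zero]; rfl
    · left
      show ((Fin.cons a w : Fin (n+3) → Pt n N) m.succ).2.2.2 = 0
      rw [Fin.cons_succ, hw]
      refine Fin.cases ?_ (fun m' => ?_) m <;> rfl
  have hA : ∀ (i'' : Fin N) (μ'' : Fin (n+2)),
      wedge1 n N (cq n N i'') (wedge1 n N (cp n N i'' μ'') (volm n N μ'')) (Fin.cons a w) =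
      a.2.1 i'' * ((if i'' = i' then (if μ'' = μ' then (1:ℝ) else 0) else 0) *
        ((-1)^(μ:ℕ) * (if μ = μ'' then (1:ℝ) else 0))) := by
    intro i'' μ''
    rw [wedge1_eq_single _ _ _ 0 ?hside]
    case hside =>
      intro j hj
      obtain ⟨m, rfl⟩ := Fin.eq_succ_of_ne_zero hj
      left
      show ((Fin.cons a w : Fin (n+3) → Pt n N) m.succ).2.1 i'' = 0
      rw [Fin.cons_succ, hw]
      refine Fin.cases ?_ (fun m' => ?_) m <;> rfl
    rw [cons_comp_zero_succAbove, Fin.cons_zero, hw]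
    rw [wedge1_eq_single _ _ _ 0 ?hside2]
    case hside2 =>
      intro j hj
      obtain ⟨m, rfl⟩ := Fin.eq_succ_of_ne_zero hj
      left
      show ((Fin.cons (ep n N i' μ') (fun j => ex n N (μ.succAbove j)) : Fin (n+2) → Pt n N)
        m.succ).2.2.1 i'' μ'' = 0
      rw [Fin.cons_succ]; rfl
    rw [cons_comp_zero_succAbove, Fin.cons_zero]
    have hv : volm n N μ'' (fun j => ex n N (μ.succAbove j)) =
        (-1)^(μ:ℕ) * (if μ = μ'' then (1:ℝ) else 0) := by
      show vol n N (Fin.cons (ex n N μ'') (fun j => ex n N (μ.succAbove j))) = _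
      rw [vol_cons]
      congr 1
      simp [MPS.ex, Pi.single_apply]
    rw [hv]
    simp only [MPS.cq, MPS.cp, MPS.ep, Fin.val_zero, pow_zero, one_mul, Pi.single_apply,
      ite_apply, Pi.zero_apply]
  have hsum : (∑ i'' : Fin N, ∑ μ'' : Fin (n+2),
      wedge1 n N (cq n N i'') (wedge1 n N (cp n N i'' μ'') (volm n N μ'')) (Fin.cons a w)) =
      if μ' = μ then (-1)^(μ:ℕ) * a.2.1 i' else 0 := by
    rw [Finset.sum_congr rfl (fun i'' _ => Finset.sum_congr rfl (fun μ'' _ => hA i'' μ''))]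
    rw [Finset.sum_eq_single i']
    · rw [Finset.sum_eq_single μ']
      · rcases eq_or_ne μ' μ with rfl | h
        · simp [mul_comm]
        · simp [h, Ne.symm h]
      · intro μ'' _ hμ''
        simp [hμ'']
      · intro h; exact absurd (Finset.mem_univ μ') h
    · intro i'' _ hi''
      apply Finset.sum_eq_zero
      intro μ'' _
      simp [hi'']
    · intro h; exact absurd (Finset.mem_univ i') h
  show (∑ i'' : Fin N, ∑ μ'' : Fin (n+2),
      wedge1 n N (cq n N i'') (wedge1 n N (cp n N i'' μ'') (volm n N μ'')) (Fin.cons a w))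
    - wedge1 n N (cE n N) (vol n N) (Fin.cons a w) = _
  rw [hsum, hB, sub_zero]

lemma omega_cons_eE (z a : Pt n N) (μ : Fin (n+2)) :
    omega n N z (Fin.cons a (Fin.cons (eE n N) (fun j => ex n N (μ.succAbove j)))) =
      (-1)^(μ:ℕ) * a.1 μ := by
  set w : Fin (n+2) → Pt n N := Fin.cons (eE n N) (fun j => ex n N (μ.succAbove j)) with hw
  have hA : (∑ i'' : Fin N, ∑ μ'' : Fin (n+2),
      wedge1 n N (cq n N i'') (wedge1 n N (cp n N i'' μ'') (volm n N μ'')) (Fin.cons a w)) = 0 := by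
    apply Finset.sum_eq_zero; intro i'' _
    apply Finset.sum_eq_zero; intro μ'' _
    apply wedge1_eq_zero
    intro j
    refine Fin.cases ?_ (fun m => ?_) j
    · right
      rw [cons_comp_zero_succAbove]
      apply wedge1_eq_zero
      intro j'
      left
      show (w j').2.2.1 i'' μ'' = 0
      rw [hw]
      refine Fin.cases ?_ (fun m' => ?_) j' <;> rfl
    · left
      show ((Fin.cons a w : Fin (n+3) → Pt n N) m.succ).2.1 i'' = 0
      rw [Fin.cons_succ, hw]
      refine Fin.cases ?_ (fun m' => ?_) m <;> rfl
  have hB : wedge1 n N (cE n N) (vol n N) (Fin.cons a w) =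
      (-1) * ((-1)^(μ:ℕ) * a.1 μ) := by
    rw [wedge1_eq_single _ _ _ (Fin.succ 0) ?hside]
    case hside =>
      intro j hj
      revert hj
      refine Fin.cases ?_ (fun m => ?_) j <;> intro hj
      · right
        rw [cons_comp_zero_succAbove]
        refine vol_eq_zero _ 0 ?_
        rw [hw, Fin.cons_zero]; rfl
      · left
        have hm0 : m ≠ 0 := fun h => hj (by rw [h])
        obtain ⟨m', rfl⟩ := Fin.eq_succ_of_ne_zero hm0
        show ((Fin.cons a w : Fin (n+3) → Pt n N) m'.succ.succ).2.2.2 = 0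
        rw [Fin.cons_succ, hw, Fin.cons_succ]; rfl
    have h1 : ((Fin.cons a w : Fin (n+3) → Pt n N) ∘ Fin.succAbove (Fin.succ 0)) =
        Fin.cons a (fun j => ex n N (μ.succAbove j)) := by
      rw [cons_comp_succ_succAbove, hw, cons_comp_zero_succAbove]
    rw [h1, vol_cons, Fin.cons_succ, hw, Fin.cons_zero]
    simp [MPS.cE, MPS.eE, Fin.val_succ]
  show (∑ i'' : Fin N, ∑ μ'' : Fin (n+2),
      wedge1 n N (cq n N i'') (wedge1 n N (cp n N i'' μ'') (volm n N μ'')) (Fin.cons a w))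
    - wedge1 n N (cE n N) (vol n N) (Fin.cons a w) = _
  rw [hA, hB]
  ring

end Aux3
section Aux4
open MPS

variable {n N : ℕ}

lemma cons_ex_zero :
    (Fin.cons (ex n N 0) (fun j : Fin n => ex n N j.succ.succ) : Fin (n+1) → Pt n N) =
      fun j => ex n N ((1 : Fin (n+2)).succAbove j) := by
  funext j
  refine Fin.cases ?_ (fun m => ?_) j
  · rw [Fin.cons_zero, ← Fin.succ_zero_eq_one, Fin.succ_succAbove_zero]
  · rw [Fin.cons_succ, ← Fin.succ_zero_eq_one, Fin.succ_succAbove_succ, Fin.zero_succAbove]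

lemma cons_ex_one :
    (Fin.cons (ex n N 1) (fun j : Fin n => ex n N j.succ.succ) : Fin (n+1) → Pt n N) =
      fun j => ex n N ((0 : Fin (n+2)).succAbove j) := by
  funext j
  refine Fin.cases ?_ (fun m => ?_) j
  · rw [Fin.cons_zero, Fin.zero_succAbove, Fin.succ_zero_eq_one]
  · rw [Fin.cons_succ, Fin.zero_succAbove]

lemma volm_zero_cons (a : Pt n N) :
    volm n N 0 (Fin.cons a (fun j : Fin n => ex n N j.succ.succ)) = a.1 1 := by
  show vol n N (Fin.cons (ex n N 0) (Fin.cons a (fun j : Fin n => ex n N j.succ.succ))) = _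
  rw [vol_swap, cons_ex_zero, vol_cons, Fin.val_one]
  ring

lemma volm_one_cons (a : Pt n N) :
    volm n N 1 (Fin.cons a (fun j : Fin n => ex n N j.succ.succ)) = -(a.1 0) := by
  show vol n N (Fin.cons (ex n N 1) (Fin.cons a (fun j : Fin n => ex n N j.succ.succ))) = _
  rw [vol_swap, cons_ex_one, vol_cons, Fin.val_zero]
  ring

lemma omega_D (z a : Pt n N) (i : Fin N) (μ' : Fin (n+2)) :
    omega n N z (Fin.cons a (Fin.cons (MPS.eq n N i)
      (Fin.cons (ep n N i μ') (fun j : Fin n => ex n N j.succ.succ)))) =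
      volm n N μ' (Fin.cons a (fun j : Fin n => ex n N j.succ.succ)) := by
  set u : Fin (n+1) → Pt n N := Fin.cons (ep n N i μ') (fun j : Fin n => ex n N j.succ.succ)
    with hu
  set w : Fin (n+2) → Pt n N := Fin.cons (MPS.eq n N i) u with hw
  have hB : wedge1 n N (cE n N) (vol n N) (Fin.cons a w) = 0 := by
    apply wedge1_eq_zero
    intro j
    refine Fin.cases ?_ (fun m => ?_) j
    · right
      rw [cons_comp_zero_succAbove]
      refine vol_eq_zero _ 0 ?_
      rw [hw, Fin.cons_zero]; rfl
    · left
      show ((Fin.cons a w : Fin (n+3) → Pt n N) m.succ).2.2.2 = 0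
      rw [Fin.cons_succ, hw]
      refine Fin.cases ?_ (fun m' => ?_) m
      · rfl
      · rw [Fin.cons_succ, hu]
        refine Fin.cases ?_ (fun m'' => ?_) m' <;> rfl
  have hA : ∀ (i'' : Fin N) (μ'' : Fin (n+2)),
      wedge1 n N (cq n N i'') (wedge1 n N (cp n N i'' μ'') (volm n N μ'')) (Fin.cons a w) =
      (if i'' = i then (1:ℝ) else 0) * ((if i'' = i then (if μ'' = μ' then (1:ℝ) else 0) else 0) *
        volm n N μ'' (Fin.cons a (fun j : Fin n => ex n N j.succ.succ))) := by
    intro i'' μ''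
    rw [wedge1_eq_single _ _ _ (Fin.succ 0) ?hside]
    case hside =>
      intro j hj
      revert hj
      refine Fin.cases ?_ (fun m => ?_) j <;> intro hj
      · right
        rw [cons_comp_zero_succAbove]
        apply wedge1_eq_zero
        intro j'
        refine Fin.cases ?_ (fun m => ?_) j'
        · left
          show (w 0).2.2.1 i'' μ'' = 0
          rw [hw, Fin.cons_zero]; rfl
        · refine Fin.cases ?_ (fun m' => ?_) m
          · right
            have hcomp : (w ∘ Fin.succAbove (Fin.succ (0 : Fin (n+1)))) =
                Fin.cons (MPS.eq n N i) (fun j : Fin n => ex n N j.succ.succ) := by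
              rw [hw, cons_comp_succ_succAbove, hu, cons_comp_zero_succAbove]
            rw [hcomp]
            show vol n N (Fin.cons (ex n N μ'')
              (Fin.cons (MPS.eq n N i) (fun j : Fin n => ex n N j.succ.succ))) = 0
            refine vol_eq_zero _ (Fin.succ 0) ?_
            rw [Fin.cons_succ, Fin.cons_zero]; rfl
          · left
            show (w (Fin.succ (Fin.succ m'))).2.2.1 i'' μ'' = 0
            rw [hw, Fin.cons_succ, hu, Fin.cons_succ]; rfl
      · left
        have hm0 : m ≠ 0 := fun h => hj (by rw [h])
        obtain ⟨m', rfl⟩ := Fin.eq_succ_of_ne_zero hm0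
        show ((Fin.cons a w : Fin (n+3) → Pt n N) m'.succ.succ).2.1 i'' = 0
        rw [Fin.cons_succ, hw, Fin.cons_succ, hu]
        refine Fin.cases ?_ (fun m'' => ?_) m' <;> rfl
    have hc1 : ((Fin.cons a w : Fin (n+3) → Pt n N) ∘ Fin.succAbove (Fin.succ 0)) =
        Fin.cons a u := by
      rw [cons_comp_succ_succAbove, hw, cons_comp_zero_succAbove]
    rw [hc1]
    rw [wedge1_eq_single _ _ _ (Fin.succ 0) ?hside2]
    case hside2 =>
      intro j' hj'
      revert hj'
      refine Fin.cases ?_ (fun m => ?_) j' <;> intro hj'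
      · right
        rw [cons_comp_zero_succAbove]
        show vol n N (Fin.cons (ex n N μ'') u) = 0
        refine vol_eq_zero _ (Fin.succ 0) ?_
        rw [Fin.cons_succ, hu, Fin.cons_zero]; rfl
      · left
        have hm0 : m ≠ 0 := fun h => hj' (by rw [h])
        obtain ⟨m', rfl⟩ := Fin.eq_succ_of_ne_zero hm0
        show ((Fin.cons a u : Fin (n+2) → Pt n N) m'.succ.succ).2.2.1 i'' μ'' = 0
        rw [Fin.cons_succ, hu, Fin.cons_succ]; rfl
    have hc2 : ((Fin.cons a u : Fin (n+2) → Pt n N) ∘ Fin.succAbove (Fin.succ 0)) =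
        Fin.cons a (fun j : Fin n => ex n N j.succ.succ) := by
      rw [cons_comp_succ_succAbove, hu, cons_comp_zero_succAbove]
    rw [hc2]
    have he1 : ((Fin.cons a w : Fin (n+3) → Pt n N) (Fin.succ 0)) = MPS.eq n N i := by
      rw [Fin.cons_succ, hw, Fin.cons_zero]
    have he2 : ((Fin.cons a u : Fin (n+2) → Pt n N) (Fin.succ 0)) = ep n N i μ' := by
      rw [Fin.cons_succ, hu, Fin.cons_zero]
    rw [he1, he2]
    simp only [MPS.cq, MPS.cp, MPS.eq, MPS.ep, Pi.single_apply, ite_apply, Pi.zero_apply,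
      Fin.val_succ, Fin.val_zero, pow_one]
    split_ifs <;> ring
  have hsum : (∑ i'' : Fin N, ∑ μ'' : Fin (n+2),
      wedge1 n N (cq n N i'') (wedge1 n N (cp n N i'' μ'') (volm n N μ'')) (Fin.cons a w)) =
      volm n N μ' (Fin.cons a (fun j : Fin n => ex n N j.succ.succ)) := by
    rw [Finset.sum_congr rfl (fun i'' _ => Finset.sum_congr rfl (fun μ'' _ => hA i'' μ''))]
    rw [Finset.sum_eq_single i]
    · rw [Finset.sum_eq_single μ']
      · simp
      · intro μ'' _ hμ''
        simp [hμ'']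
      · intro h; exact absurd (Finset.mem_univ μ') h
    · intro i'' _ hi''
      apply Finset.sum_eq_zero
      intro μ'' _
      simp [hi'']
    · intro h; exact absurd (Finset.mem_univ i) h
  show (∑ i'' : Fin N, ∑ μ'' : Fin (n+2),
      wedge1 n N (cq n N i'') (wedge1 n N (cp n N i'' μ'') (volm n N μ'')) (Fin.cons a w))
    - wedge1 n N (cE n N) (vol n N) (Fin.cons a w) = _
  rw [hsum, hB, sub_zero]

end Aux4
section Aux5
open MPS

variable {n N : ℕ}

lemma lieD_eval (X : Pt n N → Pt n N) (z : Pt n N) (S : Fin (n+3) → Pt n N) :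
    lieD n N X (omega n N) z S =
      ∑ j : Fin (n+3), (-1:ℝ)^(j:ℕ) *
        fderiv ℝ (fun y => omega n N y (Fin.cons (X y) (S ∘ j.succAbove))) z (S j) := by
  have h2 : iVF n N X (extd n N (omega n N)) z S = 0 := by
    show extd n N (omega n N) z (Fin.cons (X z) S) = 0
    unfold MPS.extd
    apply Finset.sum_eq_zero
    intro j _
    have hc : (fun y => omega n N y ((Fin.cons (X z) S : Fin (n+4) → Pt n N) ∘ j.succAbove)) =
        (fun _ : Pt n N =>
          omega n N z ((Fin.cons (X z) S : Fin (n+4) → Pt n N) ∘ j.succAbove)) := rfl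
    rw [hc, fderiv_const_apply]
    simp
  show extd n N (iVF n N X (omega n N)) z S + iVF n N X (extd n N (omega n N)) z S = _
  rw [h2, add_zero]
  rfl

lemma key1 {X : Pt n N → Pt n N} (hX : Differentiable ℝ X)
    (hH : ∀ (z : Pt n N) (v : Fin (n+3) → Pt n N), lieD n N X (omega n N) z v = 0)
    (z : Pt n N) (k i : Fin N) (κ μ : Fin (n+2)) (hκμ : κ ≠ μ) :
    fderiv ℝ (fun y => (X y).2.1 i) z (ep n N k κ) = 0 := by
  have hdq : DifferentiableAt ℝ (fun y => (X y).2.1 i) z :=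
    ((differentiable_pi.mp hX.snd.fst) i).differentiableAt
  set S : Fin (n+3) → Pt n N :=
    Fin.cons (ep n N k κ) (Fin.cons (ep n N i μ) (fun j => ex n N (μ.succAbove j))) with hS
  have hSq : ∀ p, (S p).2.1 = 0 := by
    intro p
    rw [hS]
    refine Fin.cases ?_ (fun m => ?_) p
    · rfl
    · rw [Fin.cons_succ]
      refine Fin.cases ?_ (fun m' => ?_) m <;> rfl
  have h := hH z S
  rw [lieD_eval, Fin.sum_univ_succ, Fin.sum_univ_succ] at h
  have hS0 : S ∘ Fin.succAbove (0 : Fin (n+3)) =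
      Fin.cons (ep n N i μ) (fun j => ex n N (μ.succAbove j)) := by
    rw [hS]; exact cons_comp_zero_succAbove _ _
  have hS1 : S ∘ Fin.succAbove (Fin.succ (0 : Fin (n+2))) =
      Fin.cons (ep n N k κ) (fun j => ex n N (μ.succAbove j)) := by
    rw [hS, cons_comp_succ_succAbove, cons_comp_zero_succAbove]
  have e0 : (fun y => omega n N y (Fin.cons (X y) (S ∘ Fin.succAbove (0 : Fin (n+3))))) =
      (fun y => (-1:ℝ)^(μ:ℕ) * (X y).2.1 i) := by
    funext y
    rw [hS0, omega_cons_ep, if_pos rfl]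
  have e1 : (fun y =>
      omega n N y (Fin.cons (X y) (S ∘ Fin.succAbove (Fin.succ (0 : Fin (n+2)))))) =
      (fun _ => (0:ℝ)) := by
    funext y
    rw [hS1, omega_cons_ep, if_neg hκμ]
  have etail : ∀ m : Fin (n+1),
      (fun y => omega n N y (Fin.cons (X y) (S ∘ Fin.succAbove (Fin.succ (Fin.succ m))))) =
      (fun _ => (0:ℝ)) := by
    intro m
    funext y
    apply omega_zero_q _ _ (Fin.succ 0) (Fin.succ (Fin.succ 0))
    · exact fun hc => (Fin.succ_ne_zero 0) (Fin.succ_inj.mp hc).symm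
    · exact Fin.succ_ne_zero 0
    · exact Fin.succ_ne_zero _
    · intro r hr
      obtain ⟨r', rfl⟩ := Fin.eq_succ_of_ne_zero hr
      rw [Fin.cons_succ]
      exact hSq _
    · rw [Fin.cons_succ]
      show (S (Fin.succAbove (Fin.succ (Fin.succ m)) 0)).1 = 0
      rw [Fin.succ_succAbove_zero, hS, Fin.cons_zero]; rfl
    · rw [Fin.cons_succ]
      show (S (Fin.succAbove (Fin.succ (Fin.succ m)) (Fin.succ 0))).1 = 0
      rw [Fin.succ_succAbove_succ, Fin.succ_succAbove_zero, hS, Fin.cons_succ, Fin.cons_zero]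
      rfl
  rw [e0, e1] at h
  simp only [etail] at h
  have hS0v : S 0 = ep n N k κ := by rw [hS, Fin.cons_zero]
  rw [hS0v, fderiv_const_mul hdq] at h
  simp only [fderiv_const_apply, ContinuousLinearMap.zero_apply, mul_zero, add_zero,
    Finset.sum_const_zero, Fin.val_zero, pow_zero, one_mul, ContinuousLinearMap.coe_smul',
    Pi.smul_apply, smul_eq_mul] at h
  rcases mul_eq_zero.mp h with h' | h'
  · exact absurd h' (pow_ne_zero _ (by norm_num))
  · exact h'

end Aux5
section Aux6
open MPS

variable {n N : ℕ}

lemma key2 {X : Pt n N → Pt n N} (hX : Differentiable ℝ X)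
    (hH : ∀ (z : Pt n N) (v : Fin (n+3) → Pt n N), lieD n N X (omega n N) z v = 0)
    (z : Pt n N) (i : Fin N) (μ : Fin (n+2)) :
    fderiv ℝ (fun y => (X y).2.1 i) z (eE n N) =
      fderiv ℝ (fun y => (X y).1 μ) z (ep n N i μ) := by
  have hdq : DifferentiableAt ℝ (fun y => (X y).2.1 i) z :=
    ((differentiable_pi.mp hX.snd.fst) i).differentiableAt
  have hdx : DifferentiableAt ℝ (fun y => (X y).1 μ) z :=
    ((differentiable_pi.mp hX.fst) μ).differentiableAt
  set S : Fin (n+3) → Pt n N :=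
    Fin.cons (eE n N) (Fin.cons (ep n N i μ) (fun j => ex n N (μ.succAbove j))) with hS
  have hSq : ∀ p, (S p).2.1 = 0 := by
    intro p
    rw [hS]
    refine Fin.cases ?_ (fun m => ?_) p
    · rfl
    · rw [Fin.cons_succ]
      refine Fin.cases ?_ (fun m' => ?_) m <;> rfl
  have h := hH z S
  rw [lieD_eval, Fin.sum_univ_succ, Fin.sum_univ_succ] at h
  have hS0 : S ∘ Fin.succAbove (0 : Fin (n+3)) =
      Fin.cons (ep n N i μ) (fun j => ex n N (μ.succAbove j)) := by
    rw [hS]; exact cons_comp_zero_succAbove _ _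
  have hS1 : S ∘ Fin.succAbove (Fin.succ (0 : Fin (n+2))) =
      Fin.cons (eE n N) (fun j => ex n N (μ.succAbove j)) := by
    rw [hS, cons_comp_succ_succAbove, cons_comp_zero_succAbove]
  have e0 : (fun y => omega n N y (Fin.cons (X y) (S ∘ Fin.succAbove (0 : Fin (n+3))))) =
      (fun y => (-1:ℝ)^(μ:ℕ) * (X y).2.1 i) := by
    funext y
    rw [hS0, omega_cons_ep, if_pos rfl]
  have e1 : (fun y =>
      omega n N y (Fin.cons (X y) (S ∘ Fin.succAbove (Fin.succ (0 : Fin (n+2)))))) =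
      (fun y => (-1:ℝ)^(μ:ℕ) * (X y).1 μ) := by
    funext y
    rw [hS1, omega_cons_eE]
  have etail : ∀ m : Fin (n+1),
      (fun y => omega n N y (Fin.cons (X y) (S ∘ Fin.succAbove (Fin.succ (Fin.succ m))))) =
      (fun _ => (0:ℝ)) := by
    intro m
    funext y
    apply omega_zero_q _ _ (Fin.succ 0) (Fin.succ (Fin.succ 0))
    · exact fun hc => (Fin.succ_ne_zero 0) (Fin.succ_inj.mp hc).symm
    · exact Fin.succ_ne_zero 0
    · exact Fin.succ_ne_zero _
    · intro r hr
      obtain ⟨r', rfl⟩ := Fin.eq_succ_of_ne_zero hr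
      rw [Fin.cons_succ]
      exact hSq _
    · rw [Fin.cons_succ]
      show (S (Fin.succAbove (Fin.succ (Fin.succ m)) 0)).1 = 0
      rw [Fin.succ_succAbove_zero, hS, Fin.cons_zero]; rfl
    · rw [Fin.cons_succ]
      show (S (Fin.succAbove (Fin.succ (Fin.succ m)) (Fin.succ 0))).1 = 0
      rw [Fin.succ_succAbove_succ, Fin.succ_succAbove_zero, hS, Fin.cons_succ, Fin.cons_zero]
      rfl
  rw [e0, e1] at h
  simp only [etail] at h
  have hS0v : S 0 = eE n N := by rw [hS, Fin.cons_zero]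
  have hS1v : S (Fin.succ 0) = ep n N i μ := by rw [hS, Fin.cons_succ, Fin.cons_zero]
  rw [hS0v, hS1v, fderiv_const_mul hdq, fderiv_const_mul hdx] at h
  simp only [fderiv_const_apply, ContinuousLinearMap.zero_apply, mul_zero, add_zero,
    Finset.sum_const_zero, Fin.val_zero, pow_zero, one_mul, Fin.val_succ, pow_one, zero_add,
    ContinuousLinearMap.coe_smul', Pi.smul_apply, smul_eq_mul] at h
  have hc : ((-1:ℝ))^(μ:ℕ) ≠ 0 := pow_ne_zero _ (by norm_num)
  apply mul_left_cancel₀ hc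
  linarith [h]

lemma key3 {X : Pt n N → Pt n N} (hX : Differentiable ℝ X)
    (hH : ∀ (z : Pt n N) (v : Fin (n+3) → Pt n N), lieD n N X (omega n N) z v = 0)
    (z : Pt n N) (i : Fin N) :
    fderiv ℝ (fun y => (X y).1 0) z (ep n N i 0) +
      fderiv ℝ (fun y => (X y).1 1) z (ep n N i 1) = 0 := by
  have hdx0 : DifferentiableAt ℝ (fun y => (X y).1 0) z :=
    ((differentiable_pi.mp hX.fst) 0).differentiableAt
  set S : Fin (n+3) → Pt n N :=
    Fin.cons (MPS.eq n N i) (Fin.cons (ep n N i 1)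
      (Fin.cons (ep n N i 0) (fun j : Fin n => ex n N j.succ.succ))) with hS
  have h := hH z S
  rw [lieD_eval, Fin.sum_univ_succ, Fin.sum_univ_succ, Fin.sum_univ_succ] at h
  have e0 : (fun y => omega n N y (Fin.cons (X y) (S ∘ Fin.succAbove (0 : Fin (n+3))))) =
      (fun _ => (0:ℝ)) := by
    funext y
    apply omega_zero_q _ _ (Fin.succ 0) (Fin.succ (Fin.succ 0))
    · exact fun hc => (Fin.succ_ne_zero 0) (Fin.succ_inj.mp hc).symm
    · exact Fin.succ_ne_zero 0
    · exact Fin.succ_ne_zero _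
    · intro r hr
      obtain ⟨r', rfl⟩ := Fin.eq_succ_of_ne_zero hr
      rw [Fin.cons_succ]
      show (S (Fin.succAbove 0 r')).2.1 = 0
      rw [Fin.zero_succAbove, hS, Fin.cons_succ]
      refine Fin.cases ?_ (fun m => ?_) r'
      · rfl
      · rw [Fin.cons_succ]
        refine Fin.cases ?_ (fun m' => ?_) m <;> rfl
    · rw [Fin.cons_succ]
      show (S (Fin.succAbove 0 0)).1 = 0
      rw [Fin.zero_succAbove, hS, Fin.cons_succ, Fin.cons_zero]; rfl
    · rw [Fin.cons_succ]
      show (S (Fin.succAbove 0 (Fin.succ 0))).1 = 0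
      rw [Fin.zero_succAbove, hS, Fin.cons_succ, Fin.cons_succ, Fin.cons_zero]; rfl
  have hS1 : S ∘ Fin.succAbove (Fin.succ (0 : Fin (n+2))) =
      Fin.cons (MPS.eq n N i) (Fin.cons (ep n N i 0) (fun j : Fin n => ex n N j.succ.succ)) := by
    rw [hS, cons_comp_succ_succAbove, cons_comp_zero_succAbove]
  have hS2 : S ∘ Fin.succAbove (Fin.succ (Fin.succ (0 : Fin (n+1)))) =
      Fin.cons (MPS.eq n N i) (Fin.cons (ep n N i 1) (fun j : Fin n => ex n N j.succ.succ)) := by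
    rw [hS, cons_comp_succ_succAbove, cons_comp_succ_succAbove, cons_comp_zero_succAbove]
  have e1 : (fun y =>
      omega n N y (Fin.cons (X y) (S ∘ Fin.succAbove (Fin.succ (0 : Fin (n+2)))))) =
      (fun y => (X y).1 1) := by
    funext y
    rw [hS1, omega_D, volm_zero_cons]
  have e2 : (fun y =>
      omega n N y (Fin.cons (X y) (S ∘ Fin.succAbove (Fin.succ (Fin.succ (0 : Fin (n+1))))))) =
      (fun y => (-1:ℝ) * (X y).1 0) := by
    funext y
    rw [hS2, omega_D, volm_one_cons]
    ring
  have etail : ∀ m : Fin n,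
      (fun y => omega n N y
        (Fin.cons (X y) (S ∘ Fin.succAbove (Fin.succ (Fin.succ (Fin.succ m)))))) =
      (fun _ => (0:ℝ)) := by
    intro m
    funext y
    haveI : NeZero n := ⟨(Fin.pos m).ne'⟩
    apply omega_zero_three _ _ (Fin.succ 0) (Fin.succ (Fin.succ 0))
      (Fin.succ (Fin.succ (Fin.succ (0 : Fin n))))
    · exact fun hc => (Fin.succ_ne_zero 0) (Fin.succ_inj.mp hc).symm
    · exact fun hc => (Fin.succ_ne_zero _) (Fin.succ_inj.mp hc).symm
    · exact fun hc => (Fin.succ_ne_zero _) (Fin.succ_inj.mp (Fin.succ_inj.mp hc)).symm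
    · rw [Fin.cons_succ]
      show (S (Fin.succAbove (Fin.succ (Fin.succ (Fin.succ m))) 0)).1 = 0
      rw [Fin.succ_succAbove_zero, hS, Fin.cons_zero]; rfl
    · rw [Fin.cons_succ]
      show (S (Fin.succAbove (Fin.succ (Fin.succ (Fin.succ m))) (Fin.succ 0))).1 = 0
      rw [Fin.succ_succAbove_succ, Fin.succ_succAbove_zero, hS, Fin.cons_succ, Fin.cons_zero]
      rfl
    · rw [Fin.cons_succ]
      show (S (Fin.succAbove (Fin.succ (Fin.succ (Fin.succ m)))
        (Fin.succ (Fin.succ (0 : Fin n))))).1 = 0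
      rw [Fin.succ_succAbove_succ, Fin.succ_succAbove_succ, Fin.succ_succAbove_zero, hS,
        Fin.cons_succ, Fin.cons_succ, Fin.cons_zero]
      rfl
  rw [e0, e1, e2] at h
  simp only [etail] at h
  have hS1v : S (Fin.succ 0) = ep n N i 1 := by rw [hS, Fin.cons_succ, Fin.cons_zero]
  have hS2v : S (Fin.succ (Fin.succ 0)) = ep n N i 0 := by
    rw [hS, Fin.cons_succ, Fin.cons_succ, Fin.cons_zero]
  rw [hS1v, hS2v, fderiv_const_mul hdx0] at h
  simp only [fderiv_const_apply, ContinuousLinearMap.zero_apply, mul_zero, zero_add, add_zero,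
    Finset.sum_const_zero, Fin.val_succ, Fin.val_zero, pow_succ, pow_zero, one_mul, pow_one,
    zero_add, ContinuousLinearMap.coe_smul', Pi.smul_apply, smul_eq_mul] at h
  linarith [h]

end Aux6
open MPS in
/-- the components `X^i` of a locally hamiltonian vector field for `ω` are
independent of the multimomentum variables `p_k^κ` and of the energy variable `p`. -/
theorem locHam_field_components (n N : ℕ)
    (X : Pt n N → Pt n N) (hX : ContDiff ℝ (⊤ : ℕ∞) X)
    (hH : ∀ (z : Pt n N) (v : Fin (n+3) → Pt n N), lieD n N X (omega n N) z v = 0) :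
    ∀ (z : Pt n N) (i : Fin N),
      (∀ (k : Fin N) (κ : Fin (n+2)), pdp n N (fun y => (X y).2.1 i) z k κ = 0) ∧
      pdE n N (fun y => (X y).2.1 i) z = 0 := by
  intro z i
  have hXd : Differentiable ℝ X := hX.differentiable (by simp)
  constructor
  · intro k κ
    show fderiv ℝ (fun y => (X y).2.1 i) z (ep n N k κ) = 0
    by_cases hκ : κ = (0 : Fin (n+2))
    · subst hκ
      exact key1 hXd hH z k i 0 1 (by simp [Fin.ext_iff])
    · exact key1 hXd hH z k i κ 0 hκ
  · show fderiv ℝ (fun y => (X y).2.1 i) z (eE n N) = 0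
    have h0 := key2 hXd hH z i 0
    have h1 := key2 hXd hH z i 1
    have h2 := key3 hXd hH z i
    linarith
end

section
/- Exact hamiltonian characterization: a locally hamiltonian vector field X on ℝ^{(N+1)(n+1)} (with components as in the classification theorem, determined by functions X^μ(x), X^i(x,q), f_0^μ(x,q)) satisfies L_X θ = 0, where θ = p_i^μ dq^i ∧ d^n x_μ + p d^n x, if and only if the functions f_0^μ are constant in q and x up to closed contribution; precisely, L_X θ = 0 iff ∂f_0^μ/∂q^i = 0 and ∂f_0^μ/∂x^μ = 0 in the formulas X_i^μ = − p_j^μ ∂X^j/∂q^i + p_i^ν ∂X^μ/∂x^ν − p_i^μ ∂X^ν/∂x^ν + ∂f_0^μ/∂q^i and X_0 = − p ∂X^μ/∂x^μ − p_i^μ ∂X^i/∂x^μ + ∂f_0^μ/∂x^μ. -/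
open scoped BigOperators

open Matrix in
lemma det_updateColumn_single {m : ℕ} (M : Matrix (Fin m) (Fin m) ℝ) (j r : Fin m) :
    (M.updateCol j (Pi.single r 1)).det = (M.updateRow r (Pi.single j 1)).det := by
  rw [← cramer_apply, cramer_eq_adjugate_mulVec, ← adjugate_apply]
  simp [Matrix.mulVec, dotProduct, Pi.single_apply]

open Matrix in
lemma det_updateColumn_expand {m : ℕ} (M : Matrix (Fin m) (Fin m) ℝ) (j : Fin m)
    (u : Fin m → ℝ) :
    (M.updateCol j u).det = ∑ r, u r * (M.updateCol j (Pi.single r 1)).det := by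
  have hu : u = ∑ r, u r • (Pi.single r 1 : Fin m → ℝ) := by
    ext s
    simp [Pi.single_apply]
  rw [← cramer_apply]
  conv_lhs => rw [hu]
  rw [map_sum]
  simp [cramer_apply]

open Matrix in
lemma det_updateRow_expand {m : ℕ} (M : Matrix (Fin m) (Fin m) ℝ) (r : Fin m)
    (ψ : Fin m → ℝ) :
    (M.updateRow r ψ).det = ∑ j, ψ j * (M.updateRow r (Pi.single j 1)).det := by
  rw [← det_transpose, ← updateCol_transpose, det_updateColumn_expand]
  refine Finset.sum_congr rfl fun j _ => ?_
  rw [updateCol_transpose, det_transpose]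

open Matrix in
/-- "SUB2": exchange a sum over column-replacements for a sum over row-replacements. -/
lemma sum_det_updateColumn {m : ℕ} (M : Matrix (Fin m) (Fin m) ℝ)
    (ψ u : Fin m → ℝ) :
    ∑ j, ψ j * (M.updateCol j u).det = ∑ r, u r * (M.updateRow r ψ).det := by
  calc ∑ j, ψ j * (M.updateCol j u).det
      = ∑ j, ψ j * ∑ r, u r * (M.updateCol j (Pi.single r 1)).det :=
        Finset.sum_congr rfl fun j _ => by rw [det_updateColumn_expand]
    _ = ∑ r, u r * ∑ j, ψ j * (M.updateRow r (Pi.single j 1)).det := by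
        simp_rw [Finset.mul_sum]
        rw [Finset.sum_comm]
        refine Finset.sum_congr rfl fun r _ => Finset.sum_congr rfl fun j _ => ?_
        rw [det_updateColumn_single]; ring
    _ = _ := Finset.sum_congr rfl fun r _ => by rw [← det_updateRow_expand]

open Matrix in
/-- "DET": the trace formula for the derivative of the determinant. -/
lemma sum_det_updateColumn_mulVec {m : ℕ} (M B : Matrix (Fin m) (Fin m) ℝ) :
    ∑ j, (M.updateCol j (B.mulVec (fun r => M r j))).det = B.trace * M.det := by
  have h : ∀ j, (M.updateCol j (B.mulVec (fun r => M r j))).det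
      = (adjugate M * (B * M)) j j := by
    intro j
    rw [← cramer_apply, cramer_eq_adjugate_mulVec]
    have h2 : B.mulVec (fun r => M r j) = fun i => (B * M) i j := by
      ext i; simp [Matrix.mulVec, Matrix.mul_apply, dotProduct]
    rw [h2]
    simp [Matrix.mulVec, Matrix.mul_apply, dotProduct]
  simp_rw [h]
  have h3 : ∑ j, (adjugate M * (B * M)) j j = (adjugate M * (B * M)).trace := rfl
  rw [h3, ← Matrix.mul_assoc, trace_mul_cycle, mul_adjugate,
    Matrix.smul_mul, Matrix.one_mul, trace_smul, smul_eq_mul, mul_comm]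

lemma cons_comp_cycleRange {m : ℕ} {α : Type*} (j : Fin (m+1)) (v : Fin (m+1) → α) (w : α) :
    Fin.cons w (v ∘ j.succAbove) = (Function.update v j w) ∘ ⇑(j.cycleRange.symm) := by
  funext r
  refine Fin.cases ?_ (fun k => ?_) r
  · have h0 : j.cycleRange.symm 0 = j := by
      rw [Equiv.symm_apply_eq, Fin.cycleRange_self]
    simp only [Fin.cons_zero, Function.comp_apply]
    rw [Function.update_apply, if_pos h0]
  · have hk : j.cycleRange.symm k.succ = j.succAbove k := by
      rw [Equiv.symm_apply_eq, Fin.cycleRange_succAbove]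
    simp only [Fin.cons_succ, Function.comp_apply]
    rw [Function.update_apply, hk, if_neg (Fin.succAbove_ne j k)]

open Matrix in
lemma det_cons_perm {m : ℕ} {α : Type*} (c : α → Fin (m+1) → ℝ) (v : Fin (m+1) → α)
    (w : α) (j : Fin (m+1)) :
    det (Matrix.of fun a b => c ((Fin.cons w (v ∘ j.succAbove) : Fin (m+1) → α) b) a)
      = (-1 : ℝ)^(j : ℕ)
        * det (Matrix.of fun a b => c (Function.update v j w b) a) := by
  have hM : (Matrix.of fun a b => c ((Fin.cons w (v ∘ j.succAbove) : Fin (m+1) → α) b) a)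
      = (Matrix.of fun a b => c (Function.update v j w b) a).submatrix id
          ⇑(j.cycleRange⁻¹) := by
    ext a b
    rw [cons_comp_cycleRange]
    rfl
  rw [hM, det_permute']
  congr 1
  rw [map_inv, Fin.sign_cycleRange]
  simp


namespace MPS

variable (n N : ℕ)

/-- Matrix of x-rows. -/
def Mx (v : Fin (n+2) → Pt n N) : Matrix (Fin (n+2)) (Fin (n+2)) ℝ :=
  Matrix.of fun a b => (v b).1 a

/-- The linear "row data" of the form `dq^i` in place of `dx^μ`. -/
def rowL (i : Fin N) (μ : Fin (n+2)) (z : Pt n N) : Fin (n+2) → ℝ :=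
  Function.update z.1 μ (z.2.1 i)

def Mq (i : Fin N) (μ : Fin (n+2)) (v : Fin (n+2) → Pt n N) :
    Matrix (Fin (n+2)) (Fin (n+2)) ℝ :=
  Matrix.of fun a b => rowL n N i μ (v b) a

lemma rowL_apply (i : Fin N) (μ : Fin (n+2)) (z : Pt n N) (a : Fin (n+2)) :
    rowL n N i μ z a = if a = μ then z.2.1 i else z.1 a :=
  Function.update_apply _ _ _ _

lemma vol_eq_det (v : Fin (n+2) → Pt n N) : vol n N v = (Mx n N v).det := rfl

lemma volm_eq_det (μ : Fin (n+2)) (u : Fin (n+1) → Pt n N) :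
    volm n N μ u = (-1 : ℝ)^(μ : ℕ) * (Matrix.of fun a b => (u b).1 (μ.succAbove a)).det := by
  have hexp := Matrix.det_succ_column_zero (Mx n N (Fin.cons (ex n N μ) u))
  have hside : ∀ r : Fin (n+2), r ≠ μ →
      (-1:ℝ)^(r:ℕ) * Mx n N (Fin.cons (ex n N μ) u) r 0 *
        ((Mx n N (Fin.cons (ex n N μ) u)).submatrix r.succAbove Fin.succ).det = 0 := by
    intro r hr
    have h0 : Mx n N (Fin.cons (ex n N μ) u) r 0 = 0 := by
      show (ex n N μ).1 r = 0
      simp [ex, Pi.single_apply, hr]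
    rw [h0, mul_zero, zero_mul]
  have hmain := Fintype.sum_eq_single (f := fun r : Fin (n+2) =>
      (-1:ℝ)^(r:ℕ) * Mx n N (Fin.cons (ex n N μ) u) r 0 *
        ((Mx n N (Fin.cons (ex n N μ) u)).submatrix r.succAbove Fin.succ).det) μ hside
  show (Mx n N (Fin.cons (ex n N μ) u)).det = _
  rw [hexp, hmain]
  have h1 : Mx n N (Fin.cons (ex n N μ) u) μ 0 = 1 := by
    show (ex n N μ).1 μ = 1
    simp [ex]
  rw [h1, mul_one]
  congr 1

/-- E1: conversion of the wedge form `dq^i ∧ d^{n+1}x_μ` to a determinant. -/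
lemma wedge_cq_eq_det (i : Fin N) (μ : Fin (n+2)) (v : Fin (n+2) → Pt n N) :
    wedge1 n N (cq n N i) (volm n N μ) v = (Mq n N i μ v).det := by
  have hexp := Matrix.det_succ_row (Mq n N i μ v) μ
  rw [hexp]
  unfold wedge1
  refine Finset.sum_congr rfl fun j _ => ?_
  rw [volm_eq_det]
  have h1 : Mq n N i μ v μ j = (v j).2.1 i := by
    show rowL n N i μ (v j) μ = _
    simp [rowL]
  have h2 : ((Mq n N i μ v).submatrix μ.succAbove j.succAbove)
      = Matrix.of fun a b => ((v ∘ j.succAbove) b).1 (μ.succAbove a) := by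
    ext a b
    show rowL n N i μ (v (j.succAbove b)) (μ.succAbove a) = _
    rw [rowL_apply, if_neg (Fin.succAbove_ne μ a)]
    rfl
  rw [h1, h2, pow_add]
  show (-1:ℝ)^(j:ℕ) * cq n N i (v j) * _ = _
  rw [show cq n N i (v j) = (v j).2.1 i from rfl]
  ring

lemma Mx_update (v : Fin (n+2) → Pt n N) (j : Fin (n+2)) (w : Pt n N) :
    Mx n N (Function.update v j w) = (Mx n N v).updateCol j w.1 := by
  ext a b
  by_cases hb : b = j
  · subst hb; simp [Mx, Matrix.updateCol_apply]
  · simp [Mx, Matrix.updateCol_apply, hb, Function.update_apply]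

lemma Mq_update (i : Fin N) (μ : Fin (n+2)) (v : Fin (n+2) → Pt n N) (j : Fin (n+2))
    (w : Pt n N) :
    Mq n N i μ (Function.update v j w) = (Mq n N i μ v).updateCol j (rowL n N i μ w) := by
  ext a b
  by_cases hb : b = j
  · subst hb; simp [Mq, Matrix.updateCol_apply]
  · simp [Mq, Matrix.updateCol_apply, hb, Function.update_apply]

lemma updateRow_Mq_q (i k : Fin N) (μ : Fin (n+2)) (v : Fin (n+2) → Pt n N) :
    (Mq n N i μ v).updateRow μ (fun b => (v b).2.1 k) = Mq n N k μ v := by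
  ext a b
  by_cases ha : a = μ
  · subst ha; simp [Mq, Matrix.updateRow_apply, rowL]
  · simp [Mq, Matrix.updateRow_apply, ha, rowL_apply]

lemma updateRow_Mq_x_self (i : Fin N) (μ : Fin (n+2)) (v : Fin (n+2) → Pt n N) :
    (Mq n N i μ v).updateRow μ (fun b => (v b).1 μ) = Mx n N v := by
  ext a b
  by_cases ha : a = μ
  · subst ha; simp [Mq, Mx, Matrix.updateRow_apply]
  · simp [Mq, Mx, Matrix.updateRow_apply, ha, rowL_apply]

lemma updateRow_Mq_x_swap (i : Fin N) (μ ρ : Fin (n+2)) (v : Fin (n+2) → Pt n N)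
    (hρ : ρ ≠ μ) :
    ((Mq n N i μ v).updateRow ρ (fun b => (v b).1 μ)).det = -(Mq n N i ρ v).det := by
  have hM : (Mq n N i μ v).updateRow ρ (fun b => (v b).1 μ)
      = (Mq n N i ρ v).submatrix (Equiv.swap μ ρ) id := by
    ext a b
    rw [Matrix.updateRow_apply, Matrix.submatrix_apply, id_eq]
    by_cases ha : a = ρ
    · rw [if_pos ha, show Equiv.swap μ ρ a = μ from by rw [ha, Equiv.swap_apply_right]]
      show (v b).1 μ = rowL n N i ρ (v b) μ
      rw [rowL_apply, if_neg (Ne.symm hρ)]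
    · by_cases ha2 : a = μ
      · rw [if_neg ha, show Equiv.swap μ ρ a = ρ from by rw [ha2, Equiv.swap_apply_left]]
        show rowL n N i μ (v b) a = rowL n N i ρ (v b) ρ
        rw [rowL_apply, rowL_apply, if_pos ha2, if_pos rfl]
      · rw [if_neg ha, Equiv.swap_apply_of_ne_of_ne ha2 ha]
        show rowL n N i μ (v b) a = rowL n N i ρ (v b) a
        rw [rowL_apply, rowL_apply, if_neg ha2, if_neg ha]
  rw [hM, Matrix.det_permute]
  rw [Equiv.Perm.sign_swap (Ne.symm hρ)]
  simp

end MPS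

namespace MPS

variable (n N : ℕ)

noncomputable def pPL : Pt n N →L[ℝ] (Fin N → Fin (n+2) → ℝ) :=
  (ContinuousLinearMap.fst ℝ _ _).comp
    ((ContinuousLinearMap.snd ℝ _ _).comp (ContinuousLinearMap.snd ℝ _ _))

noncomputable def cpL (i : Fin N) (μ : Fin (n+2)) : Pt n N →L[ℝ] ℝ :=
  (ContinuousLinearMap.proj (R := ℝ) (φ := fun _ : Fin (n+2) => ℝ) μ).comp
    ((ContinuousLinearMap.proj (R := ℝ) (φ := fun _ : Fin N => (Fin (n+2) → ℝ)) i).comp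
      (pPL n N))

noncomputable def pEL : Pt n N →L[ℝ] ℝ :=
  (ContinuousLinearMap.snd ℝ _ _).comp
    ((ContinuousLinearMap.snd ℝ _ _).comp (ContinuousLinearMap.snd ℝ _ _))

lemma cpL_apply (i : Fin N) (μ : Fin (n+2)) (z : Pt n N) :
    cpL n N i μ z = z.2.2.1 i μ := rfl

lemma pEL_apply (z : Pt n N) : pEL n N z = z.2.2.2 := rfl

def rowLin (i : Fin N) (μ : Fin (n+2)) : Pt n N →ₗ[ℝ] (Fin (n+2) → ℝ) where
  toFun := rowL n N i μ
  map_add' z w := by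
    funext a
    simp only [rowL_apply, Pi.add_apply]
    split <;> rfl
  map_smul' c z := by
    funext a
    simp only [rowL_apply, Pi.smul_apply, RingHom.id_apply]
    split <;> rfl

noncomputable def sliceV (u : Fin (n+1) → Pt n N) : Pt n N →L[ℝ] ℝ :=
  LinearMap.toContinuousLinearMap
    ((LinearMap.proj (0 : Fin (n+2))).comp
      (((Matrix.cramer (Mx n N (Fin.cons 0 u))).comp (LinearMap.fst ℝ _ _))))

noncomputable def sliceQ (i : Fin N) (μ : Fin (n+2)) (u : Fin (n+1) → Pt n N) :
    Pt n N →L[ℝ] ℝ :=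
  LinearMap.toContinuousLinearMap
    ((LinearMap.proj (0 : Fin (n+2))).comp
      (((Matrix.cramer (Mq n N i μ (Fin.cons 0 u))).comp (rowLin n N i μ))))

lemma sliceV_apply (u : Fin (n+1) → Pt n N) (w : Pt n N) :
    sliceV n N u w = (Mx n N (Fin.cons w u)).det := by
  show Matrix.cramer (Mx n N (Fin.cons 0 u)) w.1 0 = _
  rw [Matrix.cramer_apply]
  congr 1
  ext a b
  rw [Matrix.updateCol_apply]
  refine Fin.cases ?_ (fun k => ?_) b
  · simp [Mx, Matrix.of_apply]
  · simp only [if_neg (Fin.succ_ne_zero k)]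
    simp [Mx, Matrix.of_apply]

lemma sliceQ_apply (i : Fin N) (μ : Fin (n+2)) (u : Fin (n+1) → Pt n N) (w : Pt n N) :
    sliceQ n N i μ u w = (Mq n N i μ (Fin.cons w u)).det := by
  show Matrix.cramer (Mq n N i μ (Fin.cons 0 u)) (rowL n N i μ w) 0 = _
  rw [Matrix.cramer_apply]
  congr 1
  ext a b
  rw [Matrix.updateCol_apply]
  refine Fin.cases ?_ (fun k => ?_) b
  · simp [Mq, Matrix.of_apply]
  · simp only [if_neg (Fin.succ_ne_zero k)]
    simp [Mq, Matrix.of_apply]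

noncomputable def thetaCLM (u : Fin (n+2) → Pt n N) : Pt n N →L[ℝ] ℝ :=
  (∑ i, ∑ μ, (Mq n N i μ u).det • cpL n N i μ) + (Mx n N u).det • pEL n N

lemma theta_eq_clm (u : Fin (n+2) → Pt n N) :
    (fun y => theta n N y u) = ⇑(thetaCLM n N u) := by
  funext y
  show (∑ i, ∑ μ, y.2.2.1 i μ * wedge1 n N (cq n N i) (volm n N μ) u)
      + y.2.2.2 * vol n N u = _
  simp only [thetaCLM, ContinuousLinearMap.add_apply, ContinuousLinearMap.coe_sum',
    Finset.sum_apply, ContinuousLinearMap.coe_smul', Pi.smul_apply, smul_eq_mul]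
  rw [vol_eq_det]
  congr 1
  · refine Finset.sum_congr rfl fun i _ => Finset.sum_congr rfl fun μ _ => ?_
    rw [wedge_cq_eq_det, cpL_apply, mul_comm]
  · rw [pEL_apply, mul_comm]

lemma hasFDerivAt_theta (u : Fin (n+2) → Pt n N) (z : Pt n N) :
    HasFDerivAt (fun y => theta n N y u) (thetaCLM n N u) z := by
  rw [theta_eq_clm]
  exact (thetaCLM n N u).hasFDerivAt

lemma thetaCLM_apply (u : Fin (n+2) → Pt n N) (h : Pt n N) :
    thetaCLM n N u h
      = (∑ i, ∑ μ, h.2.2.1 i μ * (Mq n N i μ u).det) + h.2.2.2 * (Mx n N u).det := by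
  simp only [thetaCLM, ContinuousLinearMap.add_apply, ContinuousLinearMap.coe_sum',
    Finset.sum_apply, ContinuousLinearMap.coe_smul', Pi.smul_apply, smul_eq_mul]
  congr 1
  · refine Finset.sum_congr rfl fun i _ => Finset.sum_congr rfl fun μ _ => ?_
    rw [cpL_apply, mul_comm]
  · rw [pEL_apply, mul_comm]

lemma hasFDerivAt_iVF (X : Pt n N → Pt n N) (z : Pt n N)
    (hXd : DifferentiableAt ℝ X z) (u : Fin (n+1) → Pt n N) :
    HasFDerivAt (fun y => theta n N y (Fin.cons (X y) u))
      ((∑ i, ∑ μ, (cpL n N i μ z • ((sliceQ n N i μ u).comp (fderiv ℝ X z))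
          + sliceQ n N i μ u (X z) • cpL n N i μ))
        + (pEL n N z • ((sliceV n N u).comp (fderiv ℝ X z))
          + sliceV n N u (X z) • pEL n N)) z := by
  have hfun : (fun y => theta n N y (Fin.cons (X y) u))
      = fun y => (∑ i, ∑ μ, cpL n N i μ y * sliceQ n N i μ u (X y))
          + pEL n N y * sliceV n N u (X y) := by
    funext y
    show (∑ i, ∑ μ, y.2.2.1 i μ * wedge1 n N (cq n N i) (volm n N μ) (Fin.cons (X y) u))
        + y.2.2.2 * vol n N (Fin.cons (X y) u) = _
    rw [vol_eq_det, ← sliceV_apply, ← pEL_apply n N y]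
    congr 1
    refine Finset.sum_congr rfl fun i _ => Finset.sum_congr rfl fun μ _ => ?_
    rw [wedge_cq_eq_det, ← sliceQ_apply, ← cpL_apply n N i μ y]
  rw [hfun]
  refine HasFDerivAt.add ?_ ?_
  · refine HasFDerivAt.fun_sum fun i _ => ?_
    refine HasFDerivAt.fun_sum fun μ _ => ?_
    exact (cpL n N i μ).hasFDerivAt.mul
      ((sliceQ n N i μ u).hasFDerivAt.comp z hXd.hasFDerivAt)
  · exact (pEL n N).hasFDerivAt.mul
      ((sliceV n N u).hasFDerivAt.comp z hXd.hasFDerivAt)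

lemma fderiv_iVF_apply (X : Pt n N → Pt n N) (z : Pt n N)
    (hXd : DifferentiableAt ℝ X z) (u : Fin (n+1) → Pt n N) (h : Pt n N) :
    fderiv ℝ (fun y => theta n N y (Fin.cons (X y) u)) z h
      = (∑ i, ∑ μ, (z.2.2.1 i μ * (Mq n N i μ (Fin.cons (fderiv ℝ X z h) u)).det
          + (Mq n N i μ (Fin.cons (X z) u)).det * h.2.2.1 i μ))
        + (z.2.2.2 * (Mx n N (Fin.cons (fderiv ℝ X z h) u)).det
          + (Mx n N (Fin.cons (X z) u)).det * h.2.2.2) := by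
  rw [(hasFDerivAt_iVF n N X z hXd u).fderiv]
  simp only [ContinuousLinearMap.add_apply, ContinuousLinearMap.coe_sum',
    Finset.sum_apply, ContinuousLinearMap.smul_apply, ContinuousLinearMap.comp_apply,
    smul_eq_mul]
  congr 1
  · refine Finset.sum_congr rfl fun i _ => Finset.sum_congr rfl fun μ _ => ?_
    rw [sliceQ_apply, sliceQ_apply, cpL_apply, cpL_apply]
  · rw [sliceV_apply, sliceV_apply, pEL_apply, pEL_apply]

end MPS

namespace MPS

variable (n N : ℕ)

noncomputable def cxCL (μ : Fin (n+2)) : Pt n N →L[ℝ] ℝ :=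
  (ContinuousLinearMap.proj (R := ℝ) (φ := fun _ : Fin (n+2) => ℝ) μ).comp
    (ContinuousLinearMap.fst ℝ _ _)

noncomputable def cqCL (i : Fin N) : Pt n N →L[ℝ] ℝ :=
  (ContinuousLinearMap.proj (R := ℝ) (φ := fun _ : Fin N => ℝ) i).comp
    ((ContinuousLinearMap.fst ℝ _ _).comp (ContinuousLinearMap.snd ℝ _ _))

lemma fderiv_const_dir {g : Pt n N → ℝ} {z : Pt n N} (hg : DifferentiableAt ℝ g z)
    (w : Pt n N) (hc : ∀ t : ℝ, g (z + t • w) = g z) : fderiv ℝ g z w = 0 := by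
  have hcurve : HasDerivAt (fun t : ℝ => z + t • w) w 0 := by
    have h1 : HasDerivAt (fun t : ℝ => t • w) ((1:ℝ) • w) 0 := (hasDerivAt_id 0).smul_const w
    simpa using h1.const_add z
  have hgz : HasFDerivAt g (fderiv ℝ g z) ((fun t : ℝ => z + t • w) 0) := by
    have h0 : (fun t : ℝ => z + t • w) 0 = z := by
      show z + (0:ℝ) • w = z
      rw [zero_smul, add_zero]
    rw [h0]
    exact hg.hasFDerivAt
  have hcomp : HasDerivAt (fun t : ℝ => g (z + t • w)) (fderiv ℝ g z w) 0 :=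
    hgz.comp_hasDerivAt 0 hcurve
  have hconst : HasDerivAt (fun t : ℝ => g (z + t • w)) 0 0 := by
    have heq : (fun t : ℝ => g (z + t • w)) = fun _ => g z := funext hc
    rw [heq]
    exact hasDerivAt_const 0 (g z)
  exact hcomp.unique hconst

lemma sum_single_x (c : Fin (n+2) → ℝ) :
    (∑ ν, c ν • ex n N ν) = ((c, 0, 0, 0) : Pt n N) := by
  have h1 : (∑ ν, c ν • ex n N ν).1 = c := by
    rw [Prod.fst_sum]
    funext a
    rw [Finset.sum_apply]
    have : ∀ ν, (c ν • ex n N ν).1 a = c ν * (Pi.single ν (1:ℝ) : Fin (n+2) → ℝ) a :=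
      fun ν => rfl
    simp only [this, Pi.single_apply]
    simp
  have h2 : (∑ ν, c ν • ex n N ν).2 = 0 := by
    rw [Prod.snd_sum]
    exact Finset.sum_eq_zero fun ν _ => smul_zero _
  exact Prod.ext h1 h2

lemma sum_single_q (c : Fin N → ℝ) :
    (∑ i, c i • eq n N i) = ((0, c, 0, 0) : Pt n N) := by
  have h1 : (∑ i, c i • eq n N i).1 = 0 := by
    rw [Prod.fst_sum]
    exact Finset.sum_eq_zero fun i _ => smul_zero _
  have h2 : (∑ i, c i • eq n N i).2.1 = c := by
    rw [Prod.snd_sum, Prod.fst_sum]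
    funext a
    rw [Finset.sum_apply]
    have : ∀ i, ((c i • eq n N i).2).1 a = c i * (Pi.single i (1:ℝ) : Fin N → ℝ) a :=
      fun i => rfl
    simp only [this, Pi.single_apply]
    simp
  have h3 : (∑ i, c i • eq n N i).2.2 = 0 := by
    rw [Prod.snd_sum, Prod.snd_sum]
    exact Finset.sum_eq_zero fun i _ => smul_zero _
  exact Prod.ext h1 (Prod.ext h2 h3)

lemma fderiv_eq_sum_x (g : Pt n N → ℝ) (z : Pt n N) (hg : DifferentiableAt ℝ g z)
    (hinv : ∀ y w : Pt n N, y.1 = w.1 → g y = g w) (h : Pt n N) :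
    fderiv ℝ g z h = ∑ ν, pdx n N g z ν * h.1 ν := by
  have hsplit : h = (∑ ν, h.1 ν • ex n N ν) + ((0, h.2) : Pt n N) := by
    rw [sum_single_x]
    exact Prod.ext (by simp) (by simp)
  conv_lhs => rw [hsplit]
  rw [map_add, map_sum]
  have hzero : fderiv ℝ g z ((0, h.2) : Pt n N) = 0 := by
    refine fderiv_const_dir n N hg _ fun t => ?_
    refine hinv _ _ ?_
    show z.1 + t • (0 : Fin (n+2) → ℝ) = z.1
    simp
  rw [hzero, add_zero]
  refine Finset.sum_congr rfl fun ν _ => ?_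
  rw [map_smul]
  show h.1 ν • fderiv ℝ g z (ex n N ν) = _
  rw [smul_eq_mul, mul_comm]
  rfl

lemma fderiv_eq_sum_xq (g : Pt n N → ℝ) (z : Pt n N) (hg : DifferentiableAt ℝ g z)
    (hinv : ∀ y w : Pt n N, y.1 = w.1 → y.2.1 = w.2.1 → g y = g w) (h : Pt n N) :
    fderiv ℝ g z h = (∑ ν, pdx n N g z ν * h.1 ν) + ∑ i, pdq n N g z i * h.2.1 i := by
  have hsplit : h = (∑ ν, h.1 ν • ex n N ν) + ((∑ i, h.2.1 i • eq n N i)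
      + ((0, 0, h.2.2) : Pt n N)) := by
    rw [sum_single_x, sum_single_q]
    refine Prod.ext (by simp) (Prod.ext (by simp) (by ext <;> simp))
  conv_lhs => rw [hsplit]
  rw [map_add, map_add, map_sum, map_sum]
  have hzero : fderiv ℝ g z ((0, 0, h.2.2) : Pt n N) = 0 := by
    refine fderiv_const_dir n N hg _ fun t => ?_
    refine hinv _ _ ?_ ?_
    · show z.1 + t • (0 : Fin (n+2) → ℝ) = z.1
      simp
    · show z.2.1 + t • (0 : Fin N → ℝ) = z.2.1
      simp
  rw [hzero, add_zero]
  congr 1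
  · refine Finset.sum_congr rfl fun ν _ => ?_
    rw [map_smul]
    show h.1 ν • fderiv ℝ g z (ex n N ν) = _
    rw [smul_eq_mul, mul_comm]
    rfl
  · refine Finset.sum_congr rfl fun i _ => ?_
    rw [map_smul]
    show h.2.1 i • fderiv ℝ g z (eq n N i) = _
    rw [smul_eq_mul, mul_comm]
    rfl

lemma Xderiv_x (X : Pt n N → Pt n N) (z : Pt n N) (hXd : DifferentiableAt ℝ X z)
    (hXx : ∀ y w : Pt n N, y.1 = w.1 → (X y).1 = (X w).1) (h : Pt n N) (μ : Fin (n+2)) :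
    (fderiv ℝ X z h).1 μ = ∑ ν, pdx n N (fun y => (X y).1 μ) z ν * h.1 ν := by
  have hcomp := (((cxCL n N μ).hasFDerivAt (x := X z)).comp z hXd.hasFDerivAt).fderiv
  have h1 : (fderiv ℝ X z h).1 μ = fderiv ℝ (fun y => (X y).1 μ) z h := by
    show ((cxCL n N μ).comp (fderiv ℝ X z)) h = _
    rw [← hcomp]
    rfl
  rw [h1]
  refine fderiv_eq_sum_x n N _ z ?_ (fun y w hyw => by rw [hXx y w hyw]) h
  exact ((cxCL n N μ).differentiable.differentiableAt).comp z hXd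

lemma Xderiv_q (X : Pt n N → Pt n N) (z : Pt n N) (hXd : DifferentiableAt ℝ X z)
    (hXq : ∀ y w : Pt n N, y.1 = w.1 → y.2.1 = w.2.1 → (X y).2.1 = (X w).2.1)
    (h : Pt n N) (i : Fin N) :
    (fderiv ℝ X z h).2.1 i = (∑ ν, pdx n N (fun y => (X y).2.1 i) z ν * h.1 ν)
      + ∑ j, pdq n N (fun y => (X y).2.1 i) z j * h.2.1 j := by
  have hcomp := (((cqCL n N i).hasFDerivAt (x := X z)).comp z hXd.hasFDerivAt).fderiv
  have h1 : (fderiv ℝ X z h).2.1 i = fderiv ℝ (fun y => (X y).2.1 i) z h := by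
    show ((cqCL n N i).comp (fderiv ℝ X z)) h = _
    rw [← hcomp]
    rfl
  rw [h1]
  refine fderiv_eq_sum_xq n N _ z ?_ (fun y w hyw hq => by rw [hXq y w hyw hq]) h
  exact ((cqCL n N i).differentiable.differentiableAt).comp z hXd

end MPS

namespace MPS

variable (n N : ℕ)

lemma Mq_cons_perm (i : Fin N) (μ : Fin (n+2)) (v : Fin (n+2) → Pt n N) (w : Pt n N)
    (j : Fin (n+2)) :
    (Mq n N i μ (Fin.cons w (v ∘ j.succAbove))).det
      = (-1:ℝ)^(j:ℕ) * (Mq n N i μ (Function.update v j w)).det :=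
  det_cons_perm (rowL n N i μ) v w j

lemma Mx_cons_perm (v : Fin (n+2) → Pt n N) (w : Pt n N) (j : Fin (n+2)) :
    (Mx n N (Fin.cons w (v ∘ j.succAbove))).det
      = (-1:ℝ)^(j:ℕ) * (Mx n N (Function.update v j w)).det :=
  det_cons_perm (fun z : Pt n N => z.1) v w j

lemma lieD_reduced (X : Pt n N → Pt n N) (hX : ContDiff ℝ (⊤ : ℕ∞) X) (z : Pt n N)
    (v : Fin (n+2) → Pt n N) :
    lieD n N X (theta n N) z v
      = ((∑ i, ∑ μ, (X z).2.2.1 i μ * (Mq n N i μ v).det) + (X z).2.2.2 * (Mx n N v).det)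
        + ∑ j : Fin (n+2),
            ((∑ i, ∑ μ, z.2.2.1 i μ *
                (Mq n N i μ (Function.update v j (fderiv ℝ X z (v j)))).det)
              + z.2.2.2 * (Mx n N (Function.update v j (fderiv ℝ X z (v j)))).det) := by
  have hXd : DifferentiableAt ℝ X z := (hX.differentiable (by simp)).differentiableAt
  have hfd_theta : ∀ (u : Fin (n+2) → Pt n N) (h : Pt n N),
      fderiv ℝ (fun y => theta n N y u) z h
        = (∑ i, ∑ μ, h.2.2.1 i μ * (Mq n N i μ u).det) + h.2.2.2 * (Mx n N u).det :=
    fun u h => by rw [(hasFDerivAt_theta n N u z).fderiv, thetaCLM_apply]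
  have hintegrand : ∀ (u : Fin (n+1) → Pt n N),
      (fun y => iVF n N X (theta n N) y u) = (fun y => theta n N y (Fin.cons (X y) u)) :=
    fun u => rfl
  have hA : extd n N (iVF n N X (theta n N)) z v
      = ∑ j : Fin (n+2), (-1:ℝ)^(j:ℕ) *
          ((∑ i, ∑ μ, (z.2.2.1 i μ *
              (Mq n N i μ (Fin.cons (fderiv ℝ X z (v j)) (v ∘ j.succAbove))).det
            + (Mq n N i μ (Fin.cons (X z) (v ∘ j.succAbove))).det * (v j).2.2.1 i μ))
          + (z.2.2.2 * (Mx n N (Fin.cons (fderiv ℝ X z (v j)) (v ∘ j.succAbove))).det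
            + (Mx n N (Fin.cons (X z) (v ∘ j.succAbove))).det * (v j).2.2.2)) := by
    show (∑ j : Fin (n+2), (-1:ℝ)^(j:ℕ) *
        fderiv ℝ (fun y => iVF n N X (theta n N) y (v ∘ j.succAbove)) z (v j)) = _
    refine Finset.sum_congr rfl fun j _ => ?_
    rw [hintegrand (v ∘ j.succAbove),
      fderiv_iVF_apply n N X z hXd (v ∘ j.succAbove) (v j)]
  have hB : iVF n N X (extd n N (theta n N)) z v
      = ((∑ i, ∑ μ, (X z).2.2.1 i μ * (Mq n N i μ v).det)
          + (X z).2.2.2 * (Mx n N v).det)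
        + ∑ j : Fin (n+2), (-(-1:ℝ)^(j:ℕ)) *
            ((∑ i, ∑ μ, (v j).2.2.1 i μ *
                (Mq n N i μ (Fin.cons (X z) (v ∘ j.succAbove))).det)
              + (v j).2.2.2 * (Mx n N (Fin.cons (X z) (v ∘ j.succAbove))).det) := by
    show (∑ j : Fin (n+3), (-1:ℝ)^(j:ℕ) *
        fderiv ℝ (fun y => theta n N y ((Fin.cons (X z) v : Fin (n+3) → Pt n N) ∘ j.succAbove)) z
          ((Fin.cons (X z) v : Fin (n+3) → Pt n N) j)) = _
    rw [Fin.sum_univ_succ]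
    congr 1
    · have hcomp0 : (Fin.cons (X z) v : Fin (n+3) → Pt n N) ∘ (0 : Fin (n+3)).succAbove
          = v := by
        funext k
        rw [Function.comp_apply, Fin.zero_succAbove, Fin.cons_succ]
      rw [hcomp0, Fin.cons_zero, hfd_theta v (X z), Fin.val_zero, pow_zero, one_mul]
    · refine Finset.sum_congr rfl fun j _ => ?_
      have hcomps : (Fin.cons (X z) v : Fin (n+3) → Pt n N) ∘ (Fin.succ j).succAbove
          = Fin.cons (X z) (v ∘ j.succAbove) := by
        funext k
        refine Fin.cases ?_ (fun k' => ?_) k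
        · rw [Function.comp_apply, Fin.succ_succAbove_zero, Fin.cons_zero, Fin.cons_zero]
        · rw [Function.comp_apply, Fin.succ_succAbove_succ, Fin.cons_succ, Fin.cons_succ,
            Function.comp_apply]
      rw [hcomps, Fin.cons_succ, hfd_theta (Fin.cons (X z) (v ∘ j.succAbove)) (v j),
        Fin.val_succ, pow_succ]
      ring
  show extd n N (iVF n N X (theta n N)) z v + iVF n N X (extd n N (theta n N)) z v = _
  rw [hA, hB]
  have hsum : (∑ j : Fin (n+2), (-1:ℝ)^(j:ℕ) *
          ((∑ i, ∑ μ, (z.2.2.1 i μ *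
              (Mq n N i μ (Fin.cons (fderiv ℝ X z (v j)) (v ∘ j.succAbove))).det
            + (Mq n N i μ (Fin.cons (X z) (v ∘ j.succAbove))).det * (v j).2.2.1 i μ))
          + (z.2.2.2 * (Mx n N (Fin.cons (fderiv ℝ X z (v j)) (v ∘ j.succAbove))).det
            + (Mx n N (Fin.cons (X z) (v ∘ j.succAbove))).det * (v j).2.2.2)))
      + (∑ j : Fin (n+2), (-(-1:ℝ)^(j:ℕ)) *
            ((∑ i, ∑ μ, (v j).2.2.1 i μ *
                (Mq n N i μ (Fin.cons (X z) (v ∘ j.succAbove))).det)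
              + (v j).2.2.2 * (Mx n N (Fin.cons (X z) (v ∘ j.succAbove))).det))
      = ∑ j : Fin (n+2),
            ((∑ i, ∑ μ, z.2.2.1 i μ *
                (Mq n N i μ (Function.update v j (fderiv ℝ X z (v j)))).det)
              + z.2.2.2 * (Mx n N (Function.update v j (fderiv ℝ X z (v j)))).det) := by
    rw [← Finset.sum_add_distrib]
    refine Finset.sum_congr rfl fun j _ => ?_
    simp only [Mq_cons_perm, Mx_cons_perm]
    have he : (-1:ℝ)^(j:ℕ) * (-1:ℝ)^(j:ℕ) = 1 := by
      rw [← pow_add]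
      exact Even.neg_one_pow ⟨(j:ℕ), rfl⟩
    have h1 : ∑ i, ∑ μ, (z.2.2.1 i μ *
          ((-1:ℝ)^(j:ℕ) * (Mq n N i μ (Function.update v j (fderiv ℝ X z (v j)))).det)
        + ((-1:ℝ)^(j:ℕ) * (Mq n N i μ (Function.update v j (X z))).det) * (v j).2.2.1 i μ)
        = (-1:ℝ)^(j:ℕ) * (∑ i, ∑ μ, z.2.2.1 i μ *
            (Mq n N i μ (Function.update v j (fderiv ℝ X z (v j)))).det)
          + (-1:ℝ)^(j:ℕ) * (∑ i, ∑ μ, (v j).2.2.1 i μ *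
            (Mq n N i μ (Function.update v j (X z))).det) := by
      rw [Finset.mul_sum, Finset.mul_sum, ← Finset.sum_add_distrib]
      refine Finset.sum_congr rfl fun i _ => ?_
      rw [Finset.mul_sum, Finset.mul_sum, ← Finset.sum_add_distrib]
      refine Finset.sum_congr rfl fun μ _ => ?_
      ring
    have h2 : ∑ i, ∑ μ, (v j).2.2.1 i μ *
          ((-1:ℝ)^(j:ℕ) * (Mq n N i μ (Function.update v j (X z))).det)
        = (-1:ℝ)^(j:ℕ) * ∑ i, ∑ μ, (v j).2.2.1 i μ *
            (Mq n N i μ (Function.update v j (X z))).det := by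
      rw [Finset.mul_sum]
      refine Finset.sum_congr rfl fun i _ => ?_
      rw [Finset.mul_sum]
      refine Finset.sum_congr rfl fun μ _ => ?_
      ring
    rw [h1, h2]
    linear_combination ((∑ i, ∑ μ, z.2.2.1 i μ *
        (Mq n N i μ (Function.update v j (fderiv ℝ X z (v j)))).det)
      + z.2.2.2 * (Mx n N (Function.update v j (fderiv ℝ X z (v j)))).det) * he
  linarith [hsum]

end MPS

lemma sum_split_one {α : Type*} [Fintype α] [DecidableEq α] (f : α → ℝ) (t : α) :
    ∑ x, f x = (∑ x, if x = t then 0 else f x) + f t := by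
  have h : ∀ x, f x = (if x = t then 0 else f x) + (if x = t then f t else 0) := by
    intro x
    by_cases hx : x = t
    · subst hx; simp
    · simp [hx]
  calc ∑ x, f x = ∑ x, ((if x = t then 0 else f x) + (if x = t then f t else 0)) :=
        Finset.sum_congr rfl fun x _ => h x
    _ = (∑ x, if x = t then 0 else f x) + ∑ x, (if x = t then f t else 0) :=
        Finset.sum_add_distrib
    _ = _ := by rw [Finset.sum_ite_eq' Finset.univ t (fun _ => f t)]
                simp

namespace MPS

variable (n N : ℕ)

noncomputable def aX (X : Pt n N → Pt n N) (z : Pt n N) (μ ν : Fin (n+2)) : ℝ :=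
  pdx n N (fun y => (X y).1 μ) z ν

noncomputable def bX (X : Pt n N → Pt n N) (z : Pt n N) (i : Fin N) (ν : Fin (n+2)) : ℝ :=
  pdx n N (fun y => (X y).2.1 i) z ν

noncomputable def cX (X : Pt n N → Pt n N) (z : Pt n N) (i k : Fin N) : ℝ :=
  pdq n N (fun y => (X y).2.1 i) z k

lemma K3 (X : Pt n N → Pt n N) (hX : ContDiff ℝ (⊤ : ℕ∞) X)
    (hXx : ∀ y w : Pt n N, y.1 = w.1 → (X y).1 = (X w).1)
    (z : Pt n N) (v : Fin (n+2) → Pt n N) :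
    ∑ j, (Mx n N (Function.update v j (fderiv ℝ X z (v j)))).det
      = (∑ ν, aX n N X z ν ν) * (Mx n N v).det := by
  have hXd : DifferentiableAt ℝ X z := (hX.differentiable (by simp)).differentiableAt
  have hcol : ∀ j, (fderiv ℝ X z (v j)).1
      = (Matrix.of fun μ ν => aX n N X z μ ν).mulVec (fun r => Mx n N v r j) := by
    intro j
    funext μ
    rw [Xderiv_x n N X z hXd hXx (v j) μ]
    show _ = ∑ ν, (Matrix.of fun μ ν => aX n N X z μ ν) μ ν * (fun r => Mx n N v r j) ν
    exact Finset.sum_congr rfl fun ν _ => rfl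
  calc ∑ j, (Mx n N (Function.update v j (fderiv ℝ X z (v j)))).det
      = ∑ j, ((Mx n N v).updateCol j
          ((Matrix.of fun μ ν => aX n N X z μ ν).mulVec (fun r => Mx n N v r j))).det := by
        refine Finset.sum_congr rfl fun j _ => ?_
        rw [Mx_update, hcol j]
    _ = (Matrix.of fun μ ν => aX n N X z μ ν).trace * (Mx n N v).det :=
        sum_det_updateColumn_mulVec _ _
    _ = _ := by
        congr 1

lemma K4 (X : Pt n N → Pt n N) (hX : ContDiff ℝ (⊤ : ℕ∞) X)
    (hXx : ∀ y w : Pt n N, y.1 = w.1 → (X y).1 = (X w).1)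
    (hXq : ∀ y w : Pt n N, y.1 = w.1 → y.2.1 = w.2.1 → (X y).2.1 = (X w).2.1)
    (z : Pt n N) (v : Fin (n+2) → Pt n N) (i : Fin N) (μ : Fin (n+2)) :
    ∑ j, (Mq n N i μ (Function.update v j (fderiv ℝ X z (v j)))).det
      = ((∑ ν, aX n N X z ν ν) - aX n N X z μ μ + cX n N X z i i) * (Mq n N i μ v).det
        + (∑ k, if k = i then 0 else cX n N X z i k * (Mq n N k μ v).det)
        + bX n N X z i μ * (Mx n N v).det
        + (∑ ρ, if ρ = μ then 0 else aX n N X z ρ μ * (-(Mq n N i ρ v).det)) := by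
  have hXd : DifferentiableAt ℝ X z := (hX.differentiable (by simp)).differentiableAt
  set M := Mq n N i μ v with hM
  set B : Matrix (Fin (n+2)) (Fin (n+2)) ℝ := Matrix.of fun ρ ν =>
    if ρ = μ then (if ν = μ then cX n N X z i i else bX n N X z i ν)
    else (if ν = μ then 0 else aX n N X z ρ ν) with hB
  set uvec : Fin (n+2) → ℝ := fun ρ => if ρ = μ then bX n N X z i μ else aX n N X z ρ μ
    with huvec
  have hBrow : ∀ (w : Pt n N) (ρ ν : Fin (n+2)), B ρ ν * rowL n N i μ w ν
      = if ρ = μ then (if ν = μ then cX n N X z i i * w.2.1 i else bX n N X z i ν * w.1 ν)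
        else (if ν = μ then 0 else aX n N X z ρ ν * w.1 ν) := by
    intro w ρ ν
    by_cases hν : ν = μ <;> by_cases hρ : ρ = μ <;>
      simp [hB, hν, hρ, rowL_apply]
  have hdec : ∀ w : Pt n N, rowL n N i μ (fderiv ℝ X z w)
      = (B.mulVec (rowL n N i μ w))
        + (w.1 μ • uvec
          + (∑ k, if k = i then 0 else cX n N X z i k * w.2.1 k)
              • (Pi.single μ 1 : Fin (n+2) → ℝ)) := by
    intro w
    funext ρ
    show rowL n N i μ (fderiv ℝ X z w) ρ
        = (∑ ν, B ρ ν * rowL n N i μ w ν)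
          + (w.1 μ * uvec ρ
            + (∑ k, if k = i then 0 else cX n N X z i k * w.2.1 k)
                * (Pi.single μ 1 : Fin (n+2) → ℝ) ρ)
    rw [rowL_apply]
    by_cases hρ : ρ = μ
    · rw [if_pos hρ, hρ]
      have hL : (fderiv ℝ X z w).2.1 i
          = (∑ ν, bX n N X z i ν * w.1 ν) + ∑ k, cX n N X z i k * w.2.1 k :=
        Xderiv_q n N X z hXd hXq w i
      rw [hL]
      have hBs : (∑ ν, B μ ν * rowL n N i μ w ν)
          = ∑ ν, (if ν = μ then cX n N X z i i * w.2.1 i else bX n N X z i ν * w.1 ν) := by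
        refine Finset.sum_congr rfl fun ν _ => ?_
        rw [hBrow w μ ν, if_pos rfl]
      rw [hBs, sum_split_one (fun ν => bX n N X z i ν * w.1 ν) μ,
        sum_split_one (fun k => cX n N X z i k * w.2.1 k) i,
        sum_split_one (fun ν =>
          if ν = μ then cX n N X z i i * w.2.1 i else bX n N X z i ν * w.1 ν) μ]
      have hcoll : (∑ ν, if ν = μ then 0
            else (if ν = μ then cX n N X z i i * w.2.1 i else bX n N X z i ν * w.1 ν))
          = ∑ ν, if ν = μ then 0 else bX n N X z i ν * w.1 ν := by
        refine Finset.sum_congr rfl fun ν _ => ?_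
        by_cases hν : ν = μ <;> simp [hν]
      rw [hcoll, if_pos rfl]
      have hu : uvec μ = bX n N X z i μ := by rw [huvec]; dsimp only; rw [if_pos rfl]
      rw [hu, Pi.single_eq_same]
      ring
    · rw [if_neg hρ]
      have hL : (fderiv ℝ X z w).1 ρ = ∑ ν, aX n N X z ρ ν * w.1 ν :=
        Xderiv_x n N X z hXd hXx w ρ
      rw [hL]
      have hBs : (∑ ν, B ρ ν * rowL n N i μ w ν)
          = ∑ ν, (if ν = μ then 0 else aX n N X z ρ ν * w.1 ν) := by
        refine Finset.sum_congr rfl fun ν _ => ?_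
        rw [hBrow w ρ ν, if_neg hρ]
      rw [hBs, sum_split_one (fun ν => aX n N X z ρ ν * w.1 ν) μ]
      have hu : uvec ρ = aX n N X z ρ μ := by rw [huvec]; dsimp only; rw [if_neg hρ]
      rw [hu, Pi.single_eq_of_ne hρ]
      ring
  have hsplit : ∀ j, (Mq n N i μ (Function.update v j (fderiv ℝ X z (v j)))).det
      = (M.updateCol j (B.mulVec (rowL n N i μ (v j)))).det
        + ((v j).1 μ * (M.updateCol j uvec).det
          + (∑ k, if k = i then 0 else cX n N X z i k * (v j).2.1 k)
              * (M.updateCol j (Pi.single μ 1 : Fin (n+2) → ℝ)).det) := by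
    intro j
    rw [Mq_update, ← hM, hdec (v j), Matrix.det_updateCol_add,
      Matrix.det_updateCol_add, Matrix.det_updateCol_smul,
      Matrix.det_updateCol_smul]
  have hSB : ∑ j, (M.updateCol j (B.mulVec (rowL n N i μ (v j)))).det
      = B.trace * M.det := by
    have hr : ∀ j, rowL n N i μ (v j) = fun r => M r j := fun j => rfl
    simp only [hr]
    exact sum_det_updateColumn_mulVec M B
  have htrace : B.trace
      = (∑ ν, aX n N X z ν ν) - aX n N X z μ μ + cX n N X z i i := by
    show ∑ ρ, B ρ ρ = _
    have hd : ∀ ρ, B ρ ρ = if ρ = μ then cX n N X z i i else aX n N X z ρ ρ := by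
      intro ρ
      by_cases hρ : ρ = μ <;> simp [hB, hρ]
    simp only [hd]
    have h1 : (∑ ρ, if ρ = μ then cX n N X z i i else aX n N X z ρ ρ)
        = (∑ ρ, if ρ = μ then 0
            else if ρ = μ then cX n N X z i i else aX n N X z ρ ρ)
          + (if μ = μ then cX n N X z i i else aX n N X z μ μ) :=
      sum_split_one _ μ
    have h2 : (∑ ν, aX n N X z ν ν)
        = (∑ ν, if ν = μ then 0 else aX n N X z ν ν) + aX n N X z μ μ :=
      sum_split_one _ μ
    have h3 : (∑ ρ, if ρ = μ then 0
          else (if ρ = μ then cX n N X z i i else aX n N X z ρ ρ))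
        = ∑ ρ, if ρ = μ then 0 else aX n N X z ρ ρ := by
      refine Finset.sum_congr rfl fun ρ _ => ?_
      by_cases hρ : ρ = μ <;> simp [hρ]
    rw [h1, h3, if_pos rfl]
    linarith [h2]
  have hSu : ∑ j, (v j).1 μ * (M.updateCol j uvec).det
      = bX n N X z i μ * (Mx n N v).det
        + (∑ ρ, if ρ = μ then 0 else aX n N X z ρ μ * (-(Mq n N i ρ v).det)) := by
    rw [sum_det_updateColumn M (fun j => (v j).1 μ) uvec]
    rw [sum_split_one
      (fun ρ => uvec ρ * (M.updateRow ρ (fun b => (v b).1 μ)).det) μ]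
    have hmain : uvec μ * (M.updateRow μ (fun b => (v b).1 μ)).det
        = bX n N X z i μ * (Mx n N v).det := by
      have hu : uvec μ = bX n N X z i μ := by rw [huvec]; dsimp only; rw [if_pos rfl]
      rw [hu, hM, updateRow_Mq_x_self]
    have hrest : (∑ ρ, if ρ = μ then 0
          else uvec ρ * (M.updateRow ρ (fun b => (v b).1 μ)).det)
        = ∑ ρ, if ρ = μ then 0 else aX n N X z ρ μ * (-(Mq n N i ρ v).det) := by
      refine Finset.sum_congr rfl fun ρ _ => ?_
      by_cases hρ : ρ = μ
      · simp [hρ]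
      · rw [if_neg hρ, if_neg hρ]
        have hu : uvec ρ = aX n N X z ρ μ := by rw [huvec]; dsimp only; rw [if_neg hρ]
        rw [hu, hM, updateRow_Mq_x_swap n N i μ ρ v hρ]
    rw [hmain, hrest]
    ring
  have hSe : ∑ j, ((∑ k, if k = i then 0 else cX n N X z i k * (v j).2.1 k)
        * (M.updateCol j (Pi.single μ 1 : Fin (n+2) → ℝ)).det)
      = ∑ k, if k = i then 0 else cX n N X z i k * (Mq n N k μ v).det := by
    have hswap : ∀ k, (∑ j, (v j).2.1 k
          * (M.updateCol j (Pi.single μ 1 : Fin (n+2) → ℝ)).det)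
        = (Mq n N k μ v).det := by
      intro k
      rw [sum_det_updateColumn M (fun b => (v b).2.1 k)
        (Pi.single μ 1 : Fin (n+2) → ℝ)]
      have hside : ∀ ρ : Fin (n+2), ρ ≠ μ →
          (Pi.single μ 1 : Fin (n+2) → ℝ) ρ
            * (M.updateRow ρ fun b => (v b).2.1 k).det = 0 := by
        intro ρ hρ
        rw [Pi.single_eq_of_ne hρ, zero_mul]
      rw [Fintype.sum_eq_single (f := fun ρ => (Pi.single μ 1 : Fin (n+2) → ℝ) ρ
        * (M.updateRow ρ fun b => (v b).2.1 k).det) μ hside]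
      rw [Pi.single_eq_same, one_mul, hM, updateRow_Mq_q]
    calc ∑ j, ((∑ k, if k = i then 0 else cX n N X z i k * (v j).2.1 k)
          * (M.updateCol j (Pi.single μ 1 : Fin (n+2) → ℝ)).det)
        = ∑ j, ∑ k, (if k = i then 0 else cX n N X z i k * (v j).2.1 k)
            * (M.updateCol j (Pi.single μ 1 : Fin (n+2) → ℝ)).det := by
          refine Finset.sum_congr rfl fun j _ => ?_
          rw [Finset.sum_mul]
      _ = ∑ k, ∑ j, (if k = i then 0 else cX n N X z i k * (v j).2.1 k)
            * (M.updateCol j (Pi.single μ 1 : Fin (n+2) → ℝ)).det :=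
          Finset.sum_comm
      _ = _ := by
          refine Finset.sum_congr rfl fun k _ => ?_
          by_cases hk : k = i
          · simp [hk]
          · simp only [if_neg hk]
            rw [← hswap k, Finset.mul_sum]
            refine Finset.sum_congr rfl fun j _ => ?_
            ring
  calc ∑ j, (Mq n N i μ (Function.update v j (fderiv ℝ X z (v j)))).det
      = ∑ j, ((M.updateCol j (B.mulVec (rowL n N i μ (v j)))).det
        + ((v j).1 μ * (M.updateCol j uvec).det
          + (∑ k, if k = i then 0 else cX n N X z i k * (v j).2.1 k)
              * (M.updateCol j (Pi.single μ 1 : Fin (n+2) → ℝ)).det)) :=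
        Finset.sum_congr rfl fun j _ => hsplit j
    _ = (∑ j, (M.updateCol j (B.mulVec (rowL n N i μ (v j)))).det)
        + ((∑ j, (v j).1 μ * (M.updateCol j uvec).det)
          + ∑ j, (∑ k, if k = i then 0 else cX n N X z i k * (v j).2.1 k)
              * (M.updateCol j (Pi.single μ 1 : Fin (n+2) → ℝ)).det) := by
        rw [Finset.sum_add_distrib, Finset.sum_add_distrib]
    _ = _ := by
        rw [hSB, htrace, hSu, hSe]
        ring

end MPS


namespace MPS

variable (n N : ℕ)

lemma hxch1 (X : Pt n N → Pt n N) (z : Pt n N) (v : Fin (n+2) → Pt n N) :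
    ∑ i, ∑ μ, z.2.2.1 i μ * (∑ k, if k = i then 0 else cX n N X z i k * (Mq n N k μ v).det)
      = ∑ i, ∑ μ, ((∑ k, z.2.2.1 k μ * cX n N X z k i) - z.2.2.1 i μ * cX n N X z i i)
          * (Mq n N i μ v).det := by
  rw [Finset.sum_comm]
  conv_rhs => rw [Finset.sum_comm]
  refine Finset.sum_congr rfl fun μ _ => ?_
  calc ∑ i, z.2.2.1 i μ * (∑ k, if k = i then 0 else cX n N X z i k * (Mq n N k μ v).det)
      = ∑ i, ∑ k, (if k = i then 0
          else z.2.2.1 i μ * (cX n N X z i k * (Mq n N k μ v).det)) := by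
        refine Finset.sum_congr rfl fun i _ => ?_
        rw [Finset.mul_sum]
        refine Finset.sum_congr rfl fun k _ => ?_
        by_cases hk : k = i <;> simp [hk]
    _ = ∑ k, ∑ i, (if k = i then 0
          else z.2.2.1 i μ * (cX n N X z i k * (Mq n N k μ v).det)) := Finset.sum_comm
    _ = ∑ k, ((∑ i, z.2.2.1 i μ * cX n N X z i k) - z.2.2.1 k μ * cX n N X z k k)
          * (Mq n N k μ v).det := by
        refine Finset.sum_congr rfl fun k _ => ?_
        have hflip : ∀ i' : Fin N, (if k = i' then 0
              else z.2.2.1 i' μ * (cX n N X z i' k * (Mq n N k μ v).det))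
            = (if i' = k then 0
              else z.2.2.1 i' μ * (cX n N X z i' k * (Mq n N k μ v).det)) := by
          intro i'
          by_cases h : i' = k
          · simp [h]
          · rw [if_neg (fun hh => h hh.symm), if_neg h]
        simp only [hflip]
        have hs : (∑ i', z.2.2.1 i' μ * (cX n N X z i' k * (Mq n N k μ v).det))
            = (∑ i', if i' = k then 0
                else z.2.2.1 i' μ * (cX n N X z i' k * (Mq n N k μ v).det))
              + z.2.2.1 k μ * (cX n N X z k k * (Mq n N k μ v).det) :=
          sum_split_one _ k
        rw [sub_mul, Finset.sum_mul]
        have hassoc : ∑ i', z.2.2.1 i' μ * cX n N X z i' k * (Mq n N k μ v).det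
            = ∑ i', z.2.2.1 i' μ * (cX n N X z i' k * (Mq n N k μ v).det) :=
          Finset.sum_congr rfl fun i' _ => by ring
        rw [hassoc]
        linarith [hs]

lemma hxch2 (X : Pt n N → Pt n N) (z : Pt n N) (v : Fin (n+2) → Pt n N) :
    ∑ i, ∑ μ, z.2.2.1 i μ * (∑ ρ, if ρ = μ then 0
        else aX n N X z ρ μ * (-(Mq n N i ρ v).det))
      = ∑ i, ∑ μ, (-(∑ ν, z.2.2.1 i ν * aX n N X z μ ν) + z.2.2.1 i μ * aX n N X z μ μ)
          * (Mq n N i μ v).det := by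
  refine Finset.sum_congr rfl fun i _ => ?_
  calc ∑ μ, z.2.2.1 i μ * (∑ ρ, if ρ = μ then 0
          else aX n N X z ρ μ * (-(Mq n N i ρ v).det))
      = ∑ μ, ∑ ρ, (if ρ = μ then 0
          else z.2.2.1 i μ * (aX n N X z ρ μ * (-(Mq n N i ρ v).det))) := by
        refine Finset.sum_congr rfl fun μ _ => ?_
        rw [Finset.mul_sum]
        refine Finset.sum_congr rfl fun ρ _ => ?_
        by_cases hρ : ρ = μ <;> simp [hρ]
    _ = ∑ ρ, ∑ μ, (if ρ = μ then 0
          else z.2.2.1 i μ * (aX n N X z ρ μ * (-(Mq n N i ρ v).det))) := Finset.sum_comm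
    _ = ∑ ρ, (-(∑ ν, z.2.2.1 i ν * aX n N X z ρ ν) + z.2.2.1 i ρ * aX n N X z ρ ρ)
          * (Mq n N i ρ v).det := by
        refine Finset.sum_congr rfl fun ρ _ => ?_
        have hflip : ∀ μ' : Fin (n+2), (if ρ = μ' then 0
              else z.2.2.1 i μ' * (aX n N X z ρ μ' * (-(Mq n N i ρ v).det)))
            = (if μ' = ρ then 0
              else z.2.2.1 i μ' * (aX n N X z ρ μ' * (-(Mq n N i ρ v).det))) := by
          intro μ'
          by_cases h : μ' = ρ
          · simp [h]
          · rw [if_neg (fun hh => h hh.symm), if_neg h]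
        simp only [hflip]
        have hs : (∑ μ', z.2.2.1 i μ' * (aX n N X z ρ μ' * (-(Mq n N i ρ v).det)))
            = (∑ μ', if μ' = ρ then 0
                else z.2.2.1 i μ' * (aX n N X z ρ μ' * (-(Mq n N i ρ v).det)))
              + z.2.2.1 i ρ * (aX n N X z ρ ρ * (-(Mq n N i ρ v).det)) :=
          sum_split_one _ ρ
        rw [add_mul, neg_mul, Finset.sum_mul]
        have hassoc : ∑ ν, z.2.2.1 i ν * aX n N X z ρ ν * (Mq n N i ρ v).det
            = ∑ ν, -(z.2.2.1 i ν * (aX n N X z ρ ν * (-(Mq n N i ρ v).det))) :=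
          Finset.sum_congr rfl fun ν _ => by ring
        rw [hassoc, Finset.sum_neg_distrib]
        linarith [hs]

end MPS

namespace MPS

variable (n N : ℕ)

lemma star_identity (X : Pt n N → Pt n N) (hX : ContDiff ℝ (⊤ : ℕ∞) X)
    (f0 : Pt n N → Fin (n+2) → ℝ)
    (hXx : ∀ y w : Pt n N, y.1 = w.1 → (X y).1 = (X w).1)
    (hXq : ∀ y w : Pt n N, y.1 = w.1 → y.2.1 = w.2.1 → (X y).2.1 = (X w).2.1)
    (hXp : ∀ (z : Pt n N) (i : Fin N) (μ : Fin (n+2)),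
      (X z).2.2.1 i μ =
        - (∑ j : Fin N, z.2.2.1 j μ * pdq n N (fun y => (X y).2.1 j) z i)
        + (∑ ν : Fin (n+2), z.2.2.1 i ν * pdx n N (fun y => (X y).1 μ) z ν)
        - z.2.2.1 i μ * (∑ ν : Fin (n+2), pdx n N (fun y => (X y).1 ν) z ν)
        + pdq n N (fun y => f0 y μ) z i)
    (hX0 : ∀ z : Pt n N,
      (X z).2.2.2 =
        - z.2.2.2 * (∑ μ : Fin (n+2), pdx n N (fun y => (X y).1 μ) z μ)
        - (∑ i : Fin N, ∑ μ : Fin (n+2),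
            z.2.2.1 i μ * pdx n N (fun y => (X y).2.1 i) z μ)
        + (∑ μ : Fin (n+2), pdx n N (fun y => f0 y μ) z μ))
    (z : Pt n N) (v : Fin (n+2) → Pt n N) :
    lieD n N X (theta n N) z v
      = (∑ i, ∑ μ, pdq n N (fun y => f0 y μ) z i * (Mq n N i μ v).det)
        + (∑ μ, pdx n N (fun y => f0 y μ) z μ) * (Mx n N v).det := by
  have hXp' : ∀ (i : Fin N) (μ : Fin (n+2)),
      (X z).2.2.1 i μ =
        - (∑ k, z.2.2.1 k μ * cX n N X z k i)
        + (∑ ν, z.2.2.1 i ν * aX n N X z μ ν)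
        - z.2.2.1 i μ * (∑ ν, aX n N X z ν ν)
        + pdq n N (fun y => f0 y μ) z i := fun i μ => hXp z i μ
  have hX0' : (X z).2.2.2 =
      - z.2.2.2 * (∑ ν, aX n N X z ν ν)
      - (∑ i, ∑ μ, z.2.2.1 i μ * bX n N X z i μ)
      + (∑ μ, pdx n N (fun y => f0 y μ) z μ) := hX0 z
  rw [lieD_reduced n N X hX z v]
  have hstep1 : ∑ j : Fin (n+2),
        ((∑ i, ∑ μ, z.2.2.1 i μ *
            (Mq n N i μ (Function.update v j (fderiv ℝ X z (v j)))).det)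
          + z.2.2.2 * (Mx n N (Function.update v j (fderiv ℝ X z (v j)))).det)
      = (∑ i, ∑ μ, z.2.2.1 i μ *
          ∑ j, (Mq n N i μ (Function.update v j (fderiv ℝ X z (v j)))).det)
        + z.2.2.2 * ∑ j, (Mx n N (Function.update v j (fderiv ℝ X z (v j)))).det := by
    rw [Finset.sum_add_distrib]
    congr 1
    · rw [Finset.sum_comm]
      refine Finset.sum_congr rfl fun i _ => ?_
      rw [Finset.sum_comm]
      refine Finset.sum_congr rfl fun μ _ => ?_
      rw [Finset.mul_sum]
    · rw [Finset.mul_sum]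
  rw [hstep1, K3 n N X hX hXx z v]
  have hK4s : (∑ i, ∑ μ, z.2.2.1 i μ *
        ∑ j, (Mq n N i μ (Function.update v j (fderiv ℝ X z (v j)))).det)
      = ∑ i, ∑ μ, z.2.2.1 i μ *
          (((∑ ν, aX n N X z ν ν) - aX n N X z μ μ + cX n N X z i i) * (Mq n N i μ v).det
            + (∑ k, if k = i then 0 else cX n N X z i k * (Mq n N k μ v).det)
            + bX n N X z i μ * (Mx n N v).det
            + (∑ ρ, if ρ = μ then 0 else aX n N X z ρ μ * (-(Mq n N i ρ v).det))) := by
    refine Finset.sum_congr rfl fun i _ => Finset.sum_congr rfl fun μ _ => ?_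
    rw [K4 n N X hX hXx hXq z v i μ]
  rw [hK4s]
  simp only [hXp', hX0']
  simp only [mul_add, Finset.sum_add_distrib]
  rw [hxch1 n N X z v, hxch2 n N X z v]
  have hD4 : (∑ i, ∑ μ, z.2.2.1 i μ * (bX n N X z i μ * (Mx n N v).det))
      = (∑ i, ∑ μ, z.2.2.1 i μ * bX n N X z i μ) * (Mx n N v).det := by
    rw [Finset.sum_mul]
    refine Finset.sum_congr rfl fun i _ => ?_
    rw [Finset.sum_mul]
    refine Finset.sum_congr rfl fun μ _ => ?_
    ring
  rw [hD4]
  have hT : (∑ i, ∑ μ, (-(∑ k, z.2.2.1 k μ * cX n N X z k i)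
          + (∑ ν, z.2.2.1 i ν * aX n N X z μ ν)
          - z.2.2.1 i μ * (∑ ν, aX n N X z ν ν)
          + pdq n N (fun y => f0 y μ) z i) * (Mq n N i μ v).det)
      + (∑ i, ∑ μ, z.2.2.1 i μ * (((∑ ν, aX n N X z ν ν) - aX n N X z μ μ
          + cX n N X z i i) * (Mq n N i μ v).det))
      + (∑ i, ∑ μ, ((∑ k, z.2.2.1 k μ * cX n N X z k i)
          - z.2.2.1 i μ * cX n N X z i i) * (Mq n N i μ v).det)
      + (∑ i, ∑ μ, (-(∑ ν, z.2.2.1 i ν * aX n N X z μ ν)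
          + z.2.2.1 i μ * aX n N X z μ μ) * (Mq n N i μ v).det)
      = ∑ i, ∑ μ, pdq n N (fun y => f0 y μ) z i * (Mq n N i μ v).det := by
    rw [← Finset.sum_add_distrib, ← Finset.sum_add_distrib, ← Finset.sum_add_distrib]
    refine Finset.sum_congr rfl fun i _ => ?_
    rw [← Finset.sum_add_distrib, ← Finset.sum_add_distrib, ← Finset.sum_add_distrib]
    refine Finset.sum_congr rfl fun μ _ => ?_
    ring
  linear_combination hT

end MPS

namespace MPS

variable (n N : ℕ)

lemma Mx_det_basis : (Mx n N (fun j => ex n N j)).det = 1 := by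
  have h : Mx n N (fun j => ex n N j) = 1 := by
    ext a b
    show (ex n N b).1 a = (1 : Matrix (Fin (n+2)) (Fin (n+2)) ℝ) a b
    rw [Matrix.one_apply]
    simp [ex, Pi.single_apply]
  rw [h, Matrix.det_one]

lemma Mq_det_basis (i : Fin N) (μ : Fin (n+2)) :
    (Mq n N i μ (fun j => ex n N j)).det = 0 := by
  refine Matrix.det_eq_zero_of_column_eq_zero μ fun a => ?_
  show rowL n N i μ (ex n N μ) a = 0
  rw [rowL_apply]
  by_cases ha : a = μ
  · simp [ha, ex]
  · simp [ha, ex, Pi.single_apply]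

lemma Mx_det_special (i0 : Fin N) (μ0 : Fin (n+2)) :
    (Mx n N (Function.update (fun j => ex n N j) μ0 (eq n N i0))).det = 0 := by
  refine Matrix.det_eq_zero_of_column_eq_zero μ0 fun a => ?_
  show (Function.update (fun j => ex n N j) μ0 (eq n N i0) μ0).1 a = 0
  rw [Function.update_self]
  simp [eq]

lemma Mq_det_special (i0 : Fin N) (μ0 : Fin (n+2)) (i : Fin N) (μ : Fin (n+2)) :
    (Mq n N i μ (Function.update (fun j => ex n N j) μ0 (eq n N i0))).det
      = if i = i0 ∧ μ = μ0 then 1 else 0 := by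
  by_cases hμ : μ = μ0
  · subst hμ
    by_cases hi : i = i0
    · subst hi
      rw [if_pos ⟨rfl, rfl⟩]
      have h : Mq n N i μ (Function.update (fun j => ex n N j) μ (eq n N i)) = 1 := by
        ext a b
        rw [Matrix.one_apply]
        by_cases hb : b = μ
        · subst hb
          show rowL n N i b (Function.update (fun j => ex n N j) b (eq n N i) b) a
              = if a = b then 1 else 0
          rw [Function.update_self, rowL_apply]
          by_cases ha : a = b
          · simp [ha, eq]
          · simp [ha, eq]
        · show rowL n N i μ (Function.update (fun j => ex n N j) μ (eq n N i) b) a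
              = if a = b then 1 else 0
          rw [Function.update_of_ne hb, rowL_apply]
          by_cases ha : a = μ
          · have hab : a ≠ b := fun h => hb (h ▸ ha)
            simp [ha, hab, ex, if_neg (Ne.symm hb)]
          · simp [ha, ex, Pi.single_apply]
      rw [h, Matrix.det_one]
    · rw [if_neg (fun hc => hi hc.1)]
      refine Matrix.det_eq_zero_of_column_eq_zero μ fun a => ?_
      show rowL n N i μ (Function.update (fun j => ex n N j) μ (eq n N i0) μ) a = 0
      rw [Function.update_self, rowL_apply]
      by_cases ha : a = μ
      · simp [ha, eq, Pi.single_apply, hi]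
      · simp [ha, eq]
  · rw [if_neg (fun hc => hμ hc.2)]
    refine Matrix.det_eq_zero_of_column_eq_zero μ fun a => ?_
    show rowL n N i μ (Function.update (fun j => ex n N j) μ0 (eq n N i0) μ) a = 0
    rw [Function.update_of_ne hμ, rowL_apply]
    by_cases ha : a = μ
    · simp [ha, ex]
    · simp [ha, ex, Pi.single_apply]

end MPS

open MPS in
theorem exactHam_characterization_aux (n N : ℕ)
    (X : Pt n N → Pt n N) (hX : ContDiff ℝ (⊤ : ℕ∞) X)
    (f0 : Pt n N → Fin (n+2) → ℝ)
    (hXx : ∀ z w : Pt n N, z.1 = w.1 → (X z).1 = (X w).1)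
    (hXq : ∀ z w : Pt n N, z.1 = w.1 → z.2.1 = w.2.1 → (X z).2.1 = (X w).2.1)
    (hXp : ∀ (z : Pt n N) (i : Fin N) (μ : Fin (n+2)),
      (X z).2.2.1 i μ =
        - (∑ j : Fin N, z.2.2.1 j μ * pdq n N (fun y => (X y).2.1 j) z i)
        + (∑ ν : Fin (n+2), z.2.2.1 i ν * pdx n N (fun y => (X y).1 μ) z ν)
        - z.2.2.1 i μ * (∑ ν : Fin (n+2), pdx n N (fun y => (X y).1 ν) z ν)
        + pdq n N (fun y => f0 y μ) z i)
    (hX0 : ∀ z : Pt n N,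
      (X z).2.2.2 =
        - z.2.2.2 * (∑ μ : Fin (n+2), pdx n N (fun y => (X y).1 μ) z μ)
        - (∑ i : Fin N, ∑ μ : Fin (n+2),
            z.2.2.1 i μ * pdx n N (fun y => (X y).2.1 i) z μ)
        + (∑ μ : Fin (n+2), pdx n N (fun y => f0 y μ) z μ)) :
    (∀ (z : Pt n N) (v : Fin (n+2) → Pt n N), lieD n N X (theta n N) z v = 0) ↔
      ((∀ (z : Pt n N) (i : Fin N) (μ : Fin (n+2)),
          pdq n N (fun y => f0 y μ) z i = 0) ∧
       (∀ z : Pt n N, (∑ μ : Fin (n+2), pdx n N (fun y => f0 y μ) z μ) = 0)) := by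
  constructor
  · intro h
    constructor
    · intro z i0 μ0
      have hstar := star_identity n N X hX f0 hXx hXq hXp hX0 z
        (Function.update (fun j => ex n N j) μ0 (eq n N i0))
      rw [h z _] at hstar
      rw [Mx_det_special, mul_zero, add_zero] at hstar
      have hsum : ∑ i, ∑ μ, pdq n N (fun y => f0 y μ) z i
            * (Mq n N i μ (Function.update (fun j => ex n N j) μ0 (eq n N i0))).det
          = pdq n N (fun y => f0 y μ0) z i0 := by
        have hent : ∀ (i : Fin N) (μ : Fin (n+2)),
            pdq n N (fun y => f0 y μ) z i
                * (Mq n N i μ (Function.update (fun j => ex n N j) μ0 (eq n N i0))).det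
              = if i = i0 ∧ μ = μ0 then pdq n N (fun y => f0 y μ) z i else 0 := by
          intro i μ
          rw [Mq_det_special]
          by_cases hc : i = i0 ∧ μ = μ0
          · simp [hc]
          · simp [hc]
        simp only [hent]
        rw [Fintype.sum_eq_single i0 ?hi]
        · rw [Fintype.sum_eq_single μ0 ?hmu]
          · simp
          · intro μ hμ
            simp [hμ]
        · intro i hi
          refine Finset.sum_eq_zero fun μ _ => ?_
          simp [hi]
      rw [hsum] at hstar
      linarith
    · intro z
      have hstar := star_identity n N X hX f0 hXx hXq hXp hX0 z (fun j => ex n N j)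
      rw [h z _, Mx_det_basis, mul_one] at hstar
      have hzero : ∑ i, ∑ μ, pdq n N (fun y => f0 y μ) z i
            * (Mq n N i μ (fun j => ex n N j)).det = 0 := by
        refine Finset.sum_eq_zero fun i _ => Finset.sum_eq_zero fun μ _ => ?_
        rw [Mq_det_basis, mul_zero]
      rw [hzero] at hstar
      linarith
  · rintro ⟨h1, h2⟩ z v
    rw [star_identity n N X hX f0 hXx hXq hXp hX0 z v]
    simp only [h1, h2, zero_mul, Finset.sum_const_zero, add_zero]

open MPS in
/-- exact hamiltonian characterization (multisymplectic case, `N > 1`):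
for a locally hamiltonian vector field `X` given by the classification data
`X^μ(x)`, `X^i(x,q)`, `f_0^μ(x,q)`, one has `L_X θ = 0` iff
`∂f_0^μ/∂q^i = 0` and `∂f_0^μ/∂x^μ = 0` (the latter summed over `μ`). -/
theorem exactHam_characterization (n N : ℕ) (hN : 1 < N)
    (X : Pt n N → Pt n N) (hX : ContDiff ℝ (⊤ : ℕ∞) X)
    (f0 : Pt n N → Fin (n+2) → ℝ) (hf0 : ContDiff ℝ (⊤ : ℕ∞) f0)
    (hXx : ∀ z w : Pt n N, z.1 = w.1 → (X z).1 = (X w).1)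
    (hXq : ∀ z w : Pt n N, z.1 = w.1 → z.2.1 = w.2.1 → (X z).2.1 = (X w).2.1)
    (hf0dep : ∀ z w : Pt n N, z.1 = w.1 → z.2.1 = w.2.1 → f0 z = f0 w)
    (hXp : ∀ (z : Pt n N) (i : Fin N) (μ : Fin (n+2)),
      (X z).2.2.1 i μ =
        - (∑ j : Fin N, z.2.2.1 j μ * pdq n N (fun y => (X y).2.1 j) z i)
        + (∑ ν : Fin (n+2), z.2.2.1 i ν * pdx n N (fun y => (X y).1 μ) z ν)
        - z.2.2.1 i μ * (∑ ν : Fin (n+2), pdx n N (fun y => (X y).1 ν) z ν)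
        + pdq n N (fun y => f0 y μ) z i)
    (hX0 : ∀ z : Pt n N,
      (X z).2.2.2 =
        - z.2.2.2 * (∑ μ : Fin (n+2), pdx n N (fun y => (X y).1 μ) z μ)
        - (∑ i : Fin N, ∑ μ : Fin (n+2),
            z.2.2.1 i μ * pdx n N (fun y => (X y).2.1 i) z μ)
        + (∑ μ : Fin (n+2), pdx n N (fun y => f0 y μ) z μ)) :
    (∀ (z : Pt n N) (v : Fin (n+2) → Pt n N), lieD n N X (theta n N) z v = 0) ↔
      ((∀ (z : Pt n N) (i : Fin N) (μ : Fin (n+2)),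
          pdq n N (fun y => f0 y μ) z i = 0) ∧
       (∀ z : Pt n N, (∑ μ : Fin (n+2), pdx n N (fun y => f0 y μ) z μ) = 0)) := by
  exact exactHam_characterization_aux n N X hX f0 hXx hXq hXp hX0
end

section
/- Exact hamiltonian characterization (polysymplectic case): let θ̂^a = p_i^a dq^i (ℝ-valued 1-forms on ℝ^N × ℝ^{N n̂}, a = 1,…,n̂) and let X be a locally hamiltonian vector field with data X^i(q) and f_0^a(q) as in the polysymplectic classification theorem. Then L_X θ̂^a = 0 for all a if and only if all functions f_0^a are constant, equivalently ∂f_0^a/∂q^i = 0 for all i, a. -/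
open scoped BigOperators

namespace PS

variable (N nh : ℕ)

/-- The polysymplectic model space with coordinates `(q^i, p_i^a)`,
`1 ≤ i ≤ N`, `1 ≤ a ≤ n̂`. -/
abbrev Pt := (Fin N → ℝ) × (Fin N → Fin nh → ℝ)

/-- A `k`-form on `Pt`, represented by its values on `k`-tuples of (constant) vectors. -/
abbrev Form (k : ℕ) := Pt N nh → (Fin k → Pt N nh) → ℝ

/-- The coordinate vector `∂/∂q^i`. -/
def eq (i : Fin N) : Pt N nh := (Pi.single i 1, 0)
/-- The coordinate vector `∂/∂p_i^a`. -/
def ep (i : Fin N) (a : Fin nh) : Pt N nh := (0, Pi.single i (Pi.single a 1))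

/-- The `a`-th component `ω̂^a = Σ_i dq^i ∧ dp_i^a` of the canonical
polysymplectic form. -/
def omh (a : Fin nh) : Form N nh 2 :=
  fun _ v => ∑ i : Fin N, ((v 0).1 i * (v 1).2 i a - (v 1).1 i * (v 0).2 i a)

/-- The `a`-th component `θ̂^a = Σ_i p_i^a dq^i` of the polycanonical form. -/
def thh (a : Fin nh) : Form N nh 1 :=
  fun z v => ∑ i : Fin N, z.2 i a * (v 0).1 i

/-- Exterior derivative of a `k`-form on the vector space `Pt`. -/
noncomputable def extd {k : ℕ} (ω : Form N nh k) : Form N nh (k+1) :=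
  fun x v => ∑ j : Fin (k+1), (-1 : ℝ) ^ (j : ℕ) *
    fderiv ℝ (fun y => ω y (v ∘ j.succAbove)) x (v j)

/-- Interior product of a vector field with a `(k+1)`-form. -/
def iVF {k : ℕ} (X : Pt N nh → Pt N nh) (ω : Form N nh (k+1)) : Form N nh k :=
  fun x v => ω x (Fin.cons (X x) v)

/-- Lie derivative of a `(k+1)`-form along a vector field (Cartan's formula). -/
noncomputable def lieD {k : ℕ} (X : Pt N nh → Pt N nh) (ω : Form N nh (k+1)) :
    Form N nh (k+1) :=
  fun x v => extd N nh (iVF N nh X ω) x v + iVF N nh X (extd N nh ω) x v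

/-- Lie bracket of vector fields on `Pt`. -/
noncomputable def lieB (X Y : Pt N nh → Pt N nh) : Pt N nh → Pt N nh :=
  fun z => fderiv ℝ Y z (X z) - fderiv ℝ X z (Y z)

/-- Partial derivative `∂f/∂q^i`. -/
noncomputable def pdq (f : Pt N nh → ℝ) (z : Pt N nh) (i : Fin N) : ℝ :=
  fderiv ℝ f z (eq N nh i)

end PS


open PS

section Aux
variable {N nh : ℕ}

noncomputable def sndCLM (i : Fin N) (a : Fin nh) : Pt N nh →L[ℝ] ℝ :=
  (ContinuousLinearMap.proj a).comp ((ContinuousLinearMap.proj i).comp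
    (ContinuousLinearMap.snd ℝ (Fin N → ℝ) (Fin N → Fin nh → ℝ)))

@[simp] lemma sndCLM_apply (i : Fin N) (a : Fin nh) (v : Pt N nh) :
    sndCLM i a v = v.2 i a := rfl

lemma hasFDerivAt_snd' (i : Fin N) (a : Fin nh) (z : Pt N nh) :
    HasFDerivAt (fun y : Pt N nh => y.2 i a) (sndCLM i a) z :=
  (sndCLM i a).hasFDerivAt

lemma fderiv_linp (a : Fin nh) (c : Fin N → ℝ) (z u : Pt N nh) :
    fderiv ℝ (fun y : Pt N nh => ∑ i : Fin N, y.2 i a * c i) z u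
      = ∑ i : Fin N, u.2 i a * c i := by
  have h : HasFDerivAt (fun y : Pt N nh => ∑ i : Fin N, y.2 i a * c i)
      (∑ i : Fin N, c i • sndCLM i a) z := by
    exact HasFDerivAt.fun_sum (fun i _ => (hasFDerivAt_snd' i a z).mul_const (c i))
  rw [h.fderiv]
  simp [mul_comm]

lemma fderiv_theta_X (a : Fin nh) (X : Pt N nh → Pt N nh) (hX : Differentiable ℝ X)
    (z u : Pt N nh) :
    fderiv ℝ (fun y : Pt N nh => ∑ i : Fin N, y.2 i a * (X y).1 i) z u =
      ∑ i : Fin N, (u.2 i a * (X z).1 i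
        + z.2 i a * fderiv ℝ (fun y => (X y).1 i) z u) := by
  have hXi : ∀ i : Fin N, Differentiable ℝ (fun y : Pt N nh => (X y).1 i) :=
    differentiable_pi.mp hX.fst
  have h : HasFDerivAt (fun y : Pt N nh => ∑ i : Fin N, y.2 i a * (X y).1 i)
      (∑ i : Fin N, (z.2 i a • fderiv ℝ (fun y => (X y).1 i) z
        + (X z).1 i • sndCLM i a)) z :=
    HasFDerivAt.fun_sum (fun i _ => (hasFDerivAt_snd' i a z).mul ((hXi i z).hasFDerivAt))
  rw [h.fderiv]
  simp only [ContinuousLinearMap.sum_apply, ContinuousLinearMap.add_apply,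
    ContinuousLinearMap.smul_apply, sndCLM_apply, smul_eq_mul]
  exact Finset.sum_congr rfl fun i _ => by ring

lemma fderiv_pindep (g : Pt N nh → ℝ) (hg : Differentiable ℝ g)
    (hdep : ∀ z w : Pt N nh, z.1 = w.1 → g z = g w) (z v : Pt N nh) :
    fderiv ℝ g z v = ∑ i : Fin N, v.1 i * pdq N nh g z i := by
  have hh : Differentiable ℝ (fun q : Fin N → ℝ => g (q, 0)) :=
    hg.comp (differentiable_id.prodMk (differentiable_const 0))
  have hcomp : ∀ u : Pt N nh,
      fderiv ℝ g z u = fderiv ℝ (fun q : Fin N → ℝ => g (q, 0)) z.1 u.1 := by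
    intro u
    have hgeq : g = (fun y : Pt N nh => g (y.1, 0)) :=
      funext fun y => hdep y (y.1, 0) rfl
    have h1 : HasFDerivAt (fun y : Pt N nh => g (y.1, 0))
        ((fderiv ℝ (fun q : Fin N → ℝ => g (q, 0)) z.1).comp
          (ContinuousLinearMap.fst ℝ (Fin N → ℝ) (Fin N → Fin nh → ℝ))) z :=
      ((hh z.1).hasFDerivAt).comp z hasFDerivAt_fst
    conv_lhs => rw [hgeq]
    rw [h1.fderiv]
    rfl
  have hsingle : ∀ i : Fin N, pdq N nh g z i
      = fderiv ℝ (fun q : Fin N → ℝ => g (q, 0)) z.1 (Pi.single i 1) := by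
    intro i
    show fderiv ℝ g z (PS.eq N nh i) = _
    rw [hcomp (PS.eq N nh i)]
    rfl
  rw [hcomp v]
  have hv1 : v.1 = ∑ i : Fin N, v.1 i • (Pi.single i 1 : Fin N → ℝ) := by
    funext j
    simp [Pi.single_apply]
  conv_lhs => rw [hv1]
  rw [map_sum]
  simp only [map_smul, smul_eq_mul, hsingle]

end Aux

open PS in
/-- exact hamiltonian characterization (polysymplectic case): for a
locally hamiltonian vector field `X` with data `X^i(q)` and `f_0^a(q)` as in the
classification theorem, `L_X θ̂^a = 0` for all `a` iff all the `f_0^a` are constant,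
i.e. `∂f_0^a/∂q^i = 0` for all `i, a`. -/
theorem polysymplectic_exactHam (N nh : ℕ)
    (X : Pt N nh → Pt N nh) (hX : ContDiff ℝ (⊤ : ℕ∞) X)
    (f0 : Pt N nh → Fin nh → ℝ) (hf0 : ContDiff ℝ (⊤ : ℕ∞) f0)
    (hXq : ∀ z w : Pt N nh, z.1 = w.1 → (X z).1 = (X w).1)
    (hf0dep : ∀ z w : Pt N nh, z.1 = w.1 → f0 z = f0 w)
    (hXp : ∀ (z : Pt N nh) (i : Fin N) (a : Fin nh),
      (X z).2 i a =
        - (∑ j : Fin N, z.2 j a * pdq N nh (fun y => (X y).1 j) z i)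
        + pdq N nh (fun y => f0 y a) z i) :
    (∀ (a : Fin nh) (z : Pt N nh) (v : Fin 1 → Pt N nh),
        lieD N nh X (thh N nh a) z v = 0) ↔
      (∀ (z : Pt N nh) (i : Fin N) (a : Fin nh),
        pdq N nh (fun y => f0 y a) z i = 0) := by
  have hXd : Differentiable ℝ X := hX.differentiable (by simp)
  have hXi : ∀ i : Fin N, Differentiable ℝ (fun y : Pt N nh => (X y).1 i) :=
    differentiable_pi.mp hXd.fst
  have key : ∀ (a : Fin nh) (z : Pt N nh) (v : Fin 1 → Pt N nh),
      lieD N nh X (thh N nh a) z v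
        = ∑ i : Fin N, pdq N nh (fun y => f0 y a) z i * (v 0).1 i := by
    intro a z v
    have hA : extd N nh (iVF N nh X (thh N nh a)) z v
        = fderiv ℝ (fun y : Pt N nh => ∑ i : Fin N, y.2 i a * (X y).1 i) z (v 0) := by
      simp only [extd, Fin.sum_univ_succ, Finset.univ_eq_empty, Finset.sum_empty,
        add_zero, Fin.val_zero, pow_zero, one_mul]
      rfl
    have hB : iVF N nh X (extd N nh (thh N nh a)) z v
        = fderiv ℝ (fun y : Pt N nh => ∑ i : Fin N, y.2 i a * (v 0).1 i) z (X z)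
          - fderiv ℝ (fun y : Pt N nh => ∑ i : Fin N, y.2 i a * (X z).1 i) z (v 0) := by
      simp only [iVF, extd, Fin.sum_univ_succ, Finset.univ_eq_empty, Finset.sum_empty,
        add_zero, Fin.val_zero, pow_zero, one_mul, Fin.val_succ, zero_add, pow_one,
        neg_one_mul, sub_eq_add_neg]
      rfl
    have h1 : lieD N nh X (thh N nh a) z v
        = extd N nh (iVF N nh X (thh N nh a)) z v
          + iVF N nh X (extd N nh (thh N nh a)) z v := rfl
    rw [h1, hA, hB, fderiv_theta_X a X hXd z (v 0),
      fderiv_linp a ((v 0).1) z (X z), fderiv_linp a ((X z).1) z (v 0)]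
    have hDX : ∀ i : Fin N, fderiv ℝ (fun y : Pt N nh => (X y).1 i) z (v 0)
        = ∑ j : Fin N, (v 0).1 j * pdq N nh (fun y => (X y).1 i) z j :=
      fun i => fderiv_pindep _ (hXi i) (fun z w h => congrFun (hXq z w h) i) z (v 0)
    simp only [hDX, hXp z]
    rw [Finset.sum_add_distrib]
    have swap : (∑ i : Fin N, z.2 i a
          * ∑ j : Fin N, (v 0).1 j * pdq N nh (fun y => (X y).1 i) z j)
        = ∑ i : Fin N, (∑ j : Fin N, z.2 j a * pdq N nh (fun y => (X y).1 j) z i)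
            * (v 0).1 i := by
      simp_rw [Finset.mul_sum, Finset.sum_mul]
      rw [Finset.sum_comm]
      exact Finset.sum_congr rfl fun i _ => Finset.sum_congr rfl fun j _ => by ring
    rw [swap]
    simp_rw [add_mul, neg_mul]
    rw [Finset.sum_add_distrib, Finset.sum_neg_distrib]
    ring
  constructor
  · intro h z i a
    have := h a z (fun _ => PS.eq N nh i)
    rw [key] at this
    simpa [PS.eq, Pi.single_apply] using this
  · intro h a z v
    rw [key]
    simp [h]
end
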